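/- arXiv:1312.1483 — 13 statements merged into one kernel-verified Lean document; each statement's English description precedes it below -/
import Mathlib

section
/- Let d be a positive integer and let μ be a Borel probability measure on ℂ. Then a point z ∈ ℂ belongs to the support of the d-fold rotated measure μ^{(d)} if and only if z^d belongs to the support of μ. -/
open MeasureTheory Complex
open scoped ENNReal

/-- The `k`-th branch of the `d`-th root map: `ψ_k(z) = |z|^{1/d} exp(i (arg z + 2πk)/d)`. -/
noncomputable def dRootBranch (d k : ℕ) (z : ℂ) : ℂ :=
  ((‖z‖ ^ ((d : ℝ)⁻¹) : ℝ) : ℂ) *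
    Complex.exp (Complex.I * (((z.arg + 2 * Real.pi * k) / d : ℝ) : ℂ))

/-- The `d`-fold rotated measure `μ^{(d)} = (1/d) ∑_{k<d} (ψ_k)_* μ`. -/
noncomputable def rotMeasure (d : ℕ) (μ : Measure ℂ) : Measure ℂ :=
  (d : ℝ≥0∞)⁻¹ • ∑ k ∈ Finset.range d, Measure.map (dRootBranch d k) μ

/-- The support of a measure on `ℂ`: the set of points all of whose open neighbourhoods
have positive measure. -/
def msupport (μ : Measure ℂ) : Set ℂ :=
  {z | ∀ U : Set ℂ, IsOpen U → z ∈ U → 0 < μ U}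

/-!
Every branch `ψ_k` is a right inverse of `w ↦ w ^ d`, so pushing `μ^{(d)}` forward along
`w ↦ w ^ d` gives back `μ`; a continuous pushforward maps support into support.
Conversely, the branches `ψ_k(ζ ^ d)` differ by the powers of the primitive root `e^{2πi/d}`,
so they exhaust the `d`-th roots of `ζ ^ d` and `μ (U ^ d) ≤ d · μ^{(d)}(U)`; by the open
mapping theorem `U ^ d` is an open neighbourhood of `z ^ d` whenever `U` is one of `z`.
-/

lemma measurable_dRootBranch (d k : ℕ) : Measurable (dRootBranch d k) := by
  unfold dRootBranch
  fun_prop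

lemma dRootBranch_pow {d : ℕ} (hd : d ≠ 0) (k : ℕ) (w : ℂ) : dRootBranch d k w ^ d = w := by
  have hdR : (d : ℝ) ≠ 0 := Nat.cast_ne_zero.mpr hd
  have hnorm : ((‖w‖ ^ (d : ℝ)⁻¹ : ℝ) : ℂ) ^ d = ‖w‖ := by
    rw [← Complex.ofReal_pow, ← Real.rpow_natCast, ← Real.rpow_mul (norm_nonneg w),
      inv_mul_cancel₀ hdR, Real.rpow_one]
  have hangle : (d : ℂ) * (I * (((w.arg + 2 * Real.pi * k) / d : ℝ) : ℂ))
      = w.arg * I + (k : ℤ) * (2 * Real.pi * I) := by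
    push_cast
    field_simp
  rw [dRootBranch, mul_pow, ← Complex.exp_nat_mul, hnorm, hangle, Complex.exp_add,
    Complex.exp_int_mul_two_pi_mul_I, mul_one, Complex.norm_mul_exp_arg_mul_I]

lemma dRootBranch_eq_exp_pow_mul (d k : ℕ) (w : ℂ) :
    dRootBranch d k w = exp (2 * Real.pi * I / d) ^ k * dRootBranch d 0 w := by
  rw [dRootBranch, dRootBranch, ← Complex.exp_nat_mul, mul_left_comm, ← Complex.exp_add]
  congr 3
  push_cast
  ring

lemma exists_dRootBranch_pow_eq {d : ℕ} (hd : d ≠ 0) (ζ : ℂ) :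
    ∃ k < d, dRootBranch d k (ζ ^ d) = ζ := by
  have hroots := (Complex.isPrimitiveRoot_exp d hd).nthRoots_eq (dRootBranch_pow hd 0 (ζ ^ d))
  have hζ : ζ ∈ Polynomial.nthRoots d (ζ ^ d) :=
    (Polynomial.mem_nthRoots (Nat.pos_of_ne_zero hd)).mpr rfl
  rw [hroots, Multiset.mem_map] at hζ
  obtain ⟨k, hk, hkζ⟩ := hζ
  exact ⟨k, Multiset.mem_range.mp hk, (dRootBranch_eq_exp_pow_mul d k _).trans hkζ⟩

lemma isOpenMap_complex_pow {d : ℕ} (hd : d ≠ 0) : IsOpenMap (fun z : ℂ => z ^ d) := by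
  have hanalytic : AnalyticOnNhd ℂ (fun z : ℂ => z ^ d) Set.univ :=
    fun _ _ => analyticAt_id.pow d
  refine hanalytic.is_constant_or_isOpenMap.resolve_left ?_
  rintro ⟨w, hw⟩
  have := (hw 0).trans (hw 1).symm
  simp [zero_pow hd] at this

lemma rotMeasure_apply (d : ℕ) (μ : Measure ℂ) {s : Set ℂ} (hs : MeasurableSet s) :
    rotMeasure d μ s = (d : ℝ≥0∞)⁻¹ * ∑ k ∈ Finset.range d, μ (dRootBranch d k ⁻¹' s) := by
  simp only [rotMeasure, Measure.smul_apply, Measure.finsetSum_apply, smul_eq_mul,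
    Measure.map_apply (measurable_dRootBranch d _) hs]

lemma map_pow_rotMeasure {d : ℕ} (hd : d ≠ 0) (μ : Measure ℂ) :
    (rotMeasure d μ).map (· ^ d) = μ := by
  ext s hs
  rw [Measure.map_apply (continuous_pow d).measurable hs,
    rotMeasure_apply d μ (hs.preimage (continuous_pow d).measurable)]
  simp only [← Set.preimage_comp, Function.comp_def, dRootBranch_pow hd, Set.preimage_id',
    Finset.sum_const, Finset.card_range, nsmul_eq_mul]
  rw [← mul_assoc, ENNReal.inv_mul_cancel (by exact_mod_cast hd) (ENNReal.natCast_ne_top d),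
    one_mul]

lemma measure_image_pow_le_rotMeasure {d : ℕ} (hd : d ≠ 0) (μ : Measure ℂ) {s : Set ℂ}
    (hs : MeasurableSet s) : μ ((· ^ d) '' s) ≤ d * rotMeasure d μ s := by
  have hcover : (· ^ d) '' s ⊆ ⋃ k ∈ Finset.range d, dRootBranch d k ⁻¹' s := by
    rintro _ ⟨ζ, hζ, rfl⟩
    obtain ⟨k, hk, hkζ⟩ := exists_dRootBranch_pow_eq hd ζ
    exact Set.mem_biUnion (Finset.mem_range.mpr hk) (by rwa [Set.mem_preimage, hkζ])
  rw [rotMeasure_apply d μ hs, ← mul_assoc,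
    ENNReal.mul_inv_cancel (by exact_mod_cast hd) (ENNReal.natCast_ne_top d), one_mul]
  exact (measure_mono hcover).trans (measure_biUnion_finset_le _ _)

lemma map_mem_msupport_map {f : ℂ → ℂ} (hf : Continuous f) {ν : Measure ℂ} {z : ℂ}
    (hz : z ∈ msupport ν) : f z ∈ msupport (ν.map f) := by
  intro U hU hzU
  rw [Measure.map_apply hf.measurable hU.measurableSet]
  exact hz _ (hU.preimage hf) hzU

theorem mem_msupport_rotMeasure_iff_general (d : ℕ) (hd : 0 < d) (μ : Measure ℂ) (z : ℂ) :
    z ∈ msupport (rotMeasure d μ) ↔ z ^ d ∈ msupport μ := by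
  refine ⟨fun hz => ?_, fun hz U hU hzU => ?_⟩
  · simpa only [map_pow_rotMeasure hd.ne'] using map_mem_msupport_map (continuous_pow d) hz
  · have hpos : 0 < μ ((· ^ d) '' U) := hz _ (isOpenMap_complex_pow hd.ne' U hU) ⟨z, hzU, rfl⟩
    exact pos_of_mul_pos_right
      (hpos.trans_le (measure_image_pow_le_rotMeasure hd.ne' μ hU.measurableSet)) zero_le

theorem mem_msupport_rotMeasure_iff (d : ℕ) (hd : 0 < d) (μ : Measure ℂ)
    [IsProbabilityMeasure μ] (z : ℂ) :
    z ∈ msupport (rotMeasure d μ) ↔ z ^ d ∈ msupport μ :=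
  mem_msupport_rotMeasure_iff_general d hd μ z
end

section
/- Let n and d be positive integers with 0 < d < 2n, let r > 0 be real, and let α ∈ ℂ with |α| < 1. Then the map f(u) = r·u·(1 − α/u)^{d/n}, where the complex power is the principal branch (well defined since Re(1 − α/u) > 0 for |u| > 1), is injective on the exterior region {u ∈ ℂ : |u| > 1}. -/
open Complex

/-!
Suppose `f u = f v` and put `a = α / u`, `b = α / v`, `c = d / n = 1 + t` with `|t| ≤ 1`. With
`z = log (1 - a) - log (1 - b)`, `E = exp z` and `T = exp (t z)` the equation becomes
`v = u E T`, hence `a = b E T` and `1 - a = E (1 - b)`; eliminating gives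
`T (E - 1)² = a b E (1 - T)²`. Since `‖exp w - 1‖² / ‖exp w‖ = 2 (cosh w.re - cos w.im)` and
`|t| ≤ 1`, `|z.im| < π`, we have `‖E‖ ‖T - 1‖² ≤ ‖T‖ ‖E - 1‖²`, which together with
`‖a b‖ < 1` forces `T = 1`, then `E = 1`, so `v = u`.
-/

lemma Real.cosh_mul_sub_cos_mul_le {t ξ η : ℝ} (ht : |t| ≤ 1) (hη : |η| ≤ Real.pi) :
    Real.cosh (t * ξ) - Real.cos (t * η) ≤ Real.cosh ξ - Real.cos η := by
  have hcosh : Real.cosh (t * ξ) ≤ Real.cosh ξ := by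
    rw [Real.cosh_le_cosh, abs_mul]
    exact mul_le_of_le_one_left (abs_nonneg ξ) ht
  have hcos : Real.cos η ≤ Real.cos (t * η) := by
    rw [← Real.cos_abs η, ← Real.cos_abs (t * η)]
    refine Real.cos_le_cos_of_nonneg_of_le_pi (abs_nonneg _) hη ?_
    rw [abs_mul]
    exact mul_le_of_le_one_left (abs_nonneg η) ht
  linarith

lemma Complex.norm_exp_sub_one_sq (w : ℂ) :
    ‖exp w - 1‖ ^ 2 = 2 * ‖exp w‖ * (Real.cosh w.re - Real.cos w.im) := by
  have hsc := Real.sin_sq_add_cos_sq w.im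
  have hexp : Real.exp w.re * Real.exp (-w.re) = 1 := by rw [← Real.exp_add]; simp
  rw [Complex.sq_norm, Complex.normSq_apply, Complex.norm_exp, Real.cosh_eq]
  simp only [sub_re, sub_im, exp_re, exp_im, one_re, one_im]
  linear_combination (Real.exp w.re) ^ 2 * hsc - hexp

lemma Complex.norm_exp_mul_norm_exp_ofReal_mul_sub_one_sq_le {z : ℂ} {t : ℝ} (ht : |t| ≤ 1)
    (hz : |z.im| ≤ Real.pi) :
    ‖exp z‖ * ‖exp (t * z) - 1‖ ^ 2 ≤ ‖exp (t * z)‖ * ‖exp z - 1‖ ^ 2 := by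
  have hre : (t * z : ℂ).re = t * z.re := by simp
  have him : (t * z : ℂ).im = t * z.im := by simp
  rw [norm_exp_sub_one_sq, norm_exp_sub_one_sq, hre, him]
  have key := Real.cosh_mul_sub_cos_mul_le (ξ := z.re) ht hz
  have hpos : 0 ≤ ‖exp z‖ * ‖exp (t * z)‖ := by positivity
  nlinarith

lemma Complex.exp_one_add_ofReal_mul_eq_one {z a b : ℂ} {t : ℝ} (ht : |t| ≤ 1)
    (hz : |z.im| ≤ Real.pi) (hab : ‖a‖ * ‖b‖ < 1) (ha : a = b * exp ((1 + t) * z))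
    (hsub : 1 - a = exp z * (1 - b)) :
    exp ((1 + t) * z) = 1 := by
  set E := exp z
  set T := exp (t * z)
  have hET : exp ((1 + t) * z) = E * T := by rw [← exp_add]; ring_nf
  rw [hET] at ha ⊢
  have hE : E - 1 = b * E * (1 - T) := by linear_combination -hsub - ha
  have hTE : T * (E - 1) = a * (1 - T) := by linear_combination T * hE - (1 - T) * ha
  have hsq : T * (E - 1) ^ 2 = a * b * E * (1 - T) ^ 2 := by
    linear_combination (E - 1) * hTE + a * (1 - T) * hE
  have hnorm : ‖T‖ * ‖E - 1‖ ^ 2 = ‖a‖ * ‖b‖ * (‖E‖ * ‖T - 1‖ ^ 2) := by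
    rw [← norm_pow, ← norm_mul, hsq, norm_sub_rev T 1]
    simp only [norm_mul, norm_pow]
    ring
  have hle := norm_exp_mul_norm_exp_ofReal_mul_sub_one_sq_le ht hz
  have hT : T = 1 := by
    have hzero : ‖E‖ * ‖T - 1‖ ^ 2 = 0 := by
      nlinarith [mul_nonneg (norm_nonneg E) (sq_nonneg ‖T - 1‖)]
    simpa [E, sub_eq_zero] using hzero
  rw [hT, sub_self, mul_zero, sub_eq_zero] at hE
  rw [hE, hT, one_mul]

lemma Complex.abs_im_log_sub_log_lt_pi {x y : ℂ} (hx : 0 < x.re) (hy : 0 < y.re) :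
    |(log x - log y).im| < Real.pi := by
  have hx' := abs_arg_lt_pi_div_two_iff.2 (Or.inl hx)
  have hy' := abs_arg_lt_pi_div_two_iff.2 (Or.inl hy)
  rw [sub_im, log_im, log_im]
  linarith [abs_sub x.arg y.arg]

lemma Complex.eq_mul_exp_of_mul_cpow_eq {u v x y c : ℂ} (hx : x ≠ 0) (hy : y ≠ 0)
    (h : u * x ^ c = v * y ^ c) :
    v = u * exp (c * (log x - log y)) := by
  rw [cpow_def_of_ne_zero hx, cpow_def_of_ne_zero hy] at h
  refine mul_right_cancel₀ (exp_ne_zero (log y * c)) ?_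
  rw [← h, mul_assoc, ← exp_add]
  ring_nf

lemma Complex.re_one_sub_pos {a : ℂ} (ha : ‖a‖ < 1) : 0 < (1 - a).re := by
  rw [sub_re, one_re]
  linarith [re_le_norm a]

lemma Complex.norm_div_lt_one {α u : ℂ} (hα : ‖α‖ < 1) (hu : 1 < ‖u‖) : ‖α / u‖ < 1 := by
  rw [norm_div, div_lt_one (by linarith)]
  linarith

lemma Nat.abs_cast_div_sub_one_le {d n : ℕ} (h : d ≤ 2 * n) : |(d : ℝ) / n - 1| ≤ 1 := by
  have hle : (d : ℝ) / n ≤ 2 := div_le_of_le_mul₀ n.cast_nonneg zero_le_two (by exact_mod_cast h)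
  rw [abs_le]
  constructor <;> linarith [show (0 : ℝ) ≤ d / n by positivity]

theorem precritical_map_injective_general (n d : ℕ) (hdn : d < 2 * n)
    (r : ℝ) (hr : 0 < r) (α : ℂ) (hα : ‖α‖ < 1) :
    Set.InjOn (fun u : ℂ => (r : ℂ) * u * (1 - α / u) ^ ((d : ℂ) / (n : ℂ)))
      {u : ℂ | 1 < ‖u‖} := by
  rintro u (hu : 1 < ‖u‖) v (hv : 1 < ‖v‖) h
  set t : ℝ := d / n - 1
  have ht : |t| ≤ 1 := Nat.abs_cast_div_sub_one_le hdn.le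
  have hc : (d : ℂ) / n = 1 + t := by simp [t]
  have ha := norm_div_lt_one hα hu
  have hb := norm_div_lt_one hα hv
  have hxre := re_one_sub_pos ha
  have hyre := re_one_sub_pos hb
  set z := log (1 - α / u) - log (1 - α / v)
  have hvu : v = u * exp ((1 + t) * z) := by
    refine hc ▸ eq_mul_exp_of_mul_cpow_eq (ne_zero_of_re_pos hxre) (ne_zero_of_re_pos hyre)
      (mul_left_cancel₀ (ofReal_ne_zero.2 hr.ne') ?_)
    simpa only [mul_assoc] using h
  have hab : α / u = α / v * exp ((1 + t) * z) := by
    have hu0 : u ≠ 0 := norm_pos_iff.1 (zero_lt_one.trans hu)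
    rw [div_mul_eq_mul_div, eq_div_iff (norm_pos_iff.1 (zero_lt_one.trans hv)),
      congrArg (α / u * ·) hvu, ← mul_assoc, div_mul_cancel₀ α hu0]
  have hsub : 1 - α / u = exp z * (1 - α / v) := by
    rw [exp_sub, exp_log (ne_zero_of_re_pos hxre), exp_log (ne_zero_of_re_pos hyre),
      div_mul_cancel₀ _ (ne_zero_of_re_pos hyre)]
  have hS := exp_one_add_ofReal_mul_eq_one ht (abs_im_log_sub_log_lt_pi hxre hyre).le
    (mul_lt_one_of_nonneg_of_lt_one_left (norm_nonneg _) ha hb.le) hab hsub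
  rw [hvu, hS, mul_one]

theorem precritical_map_injective (n d : ℕ) (hd : 0 < d) (hdn : d < 2 * n)
    (r : ℝ) (hr : 0 < r) (α : ℂ) (hα : ‖α‖ < 1) :
    Set.InjOn (fun u : ℂ => (r : ℂ) * u * (1 - α / u) ^ ((d : ℂ) / (n : ℂ)))
      {u : ℂ | 1 < ‖u‖} :=
  precritical_map_injective_general n d hdn r hr α hα
end

section
/- Let α, u ∈ ℂ satisfy |α| < 1 < |u|. Then Re(α/(u − α)) > −1/2. -/
/-! The Cayley-type quotient `(u + α) / (u - α)` has real part `(‖u‖² - ‖α‖²) / ‖u - α‖²`, because the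
cross terms of `(u + α) * conj (u - α)` are purely imaginary; it is therefore positive once
`‖α‖ < ‖u‖`. Since `α / (u - α) = ((u + α) / (u - α) - 1) / 2`, the claim follows. -/

namespace Complex

theorem re_add_div_sub (a b : ℂ) :
    ((a + b) / (a - b)).re = (‖a‖ ^ 2 - ‖b‖ ^ 2) / ‖a - b‖ ^ 2 := by
  rw [div_re, ← add_div, Complex.sq_norm, Complex.sq_norm, Complex.sq_norm]
  congr 1
  simp only [normSq_apply, add_re, sub_re, add_im, sub_im]
  ring

theorem re_add_div_sub_pos {a b : ℂ} (h : ‖b‖ < ‖a‖) : 0 < ((a + b) / (a - b)).re := by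
  have hab : a - b ≠ 0 := fun h0 => h.ne (by rw [sub_eq_zero.mp h0])
  rw [re_add_div_sub]
  exact div_pos (sub_pos.2 (by gcongr)) (pow_pos (norm_pos_iff.2 hab) 2)

end Complex

theorem re_key_inequality (α u : ℂ) (hα : ‖α‖ < 1) (hu : 1 < ‖u‖) :
    -(1 / 2 : ℝ) < (α / (u - α)).re := by
  have hlt : ‖α‖ < ‖u‖ := hα.trans hu
  have hne : u - α ≠ 0 := fun h0 => hlt.ne (by rw [sub_eq_zero.mp h0])
  have hsplit : α / (u - α) = ((u + α) / (u - α) - 1) / 2 := by field_simp; ring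
  have hpos := Complex.re_add_div_sub_pos hlt
  rw [hsplit, Complex.div_ofNat_re, Complex.sub_re, Complex.one_re]
  linarith
end

section
/- Let n and d be positive integers with 0 < d < 2n, let r > 0 be real, and let α ∈ ℂ with 0 < |α| < 1. Then the map f(u) = r·(u − 1/conj(α))·(1 − α/u)^{d/n − 1}, where the complex power is the principal branch (well defined since Re(1 − α/u) > 0 for |u| ≥ 1, α ≠ u), is injective on the closed exterior region {u ∈ ℂ : |u| ≥ 1}. -/
/-!
Put `w = conj α * u`, `β = ‖α‖ ^ 2` and `τ = d / n - 1 ∈ (-1, 1)`. Up to a nonzero factor the map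
is `F w = (1 - w) * (1 - β / w) ^ τ` on `{w | β ≤ ‖w‖ ^ 2}`.
Measure distances between nonzero complex numbers by `‖log (b / a)‖`. The key estimate is that
`1 - β / w` moves no farther than `1 - w`. Join `1 - w₁` to `1 - w₂` by the segment in logarithmic
coordinates. Where `β ≤ ‖w‖ ^ 2`, the logarithmic derivative of `1 - β / w` is dominated by that
of `1 - w`, because
`‖w‖²‖w - β‖² - β²‖1 - w‖² = (‖w‖² - β)(‖w - β‖² + β(1 - β))`.
Where the path enters the disc `‖w‖ ^ 2 < β`, follow `conj (1 - w)` instead, which agrees with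
`1 - β / w` on the circle `‖w‖ ^ 2 = β`. So if `F w₁ = F w₂`, the logarithms `Lᵢ` of `1 - β / wᵢ`
satisfy `‖L₂ - L₁‖ ≤ ‖log ((1 - w₂) / (1 - w₁))‖ = ‖log (exp (τ (L₁ - L₂)))‖ ≤ |τ| ‖L₂ - L₁‖`.
-/

open Complex ComplexConjugate Set

lemma norm_log_exp_le (w : ℂ) : ‖log (exp w)‖ ≤ ‖w‖ := by
  rw [log_exp_eq_re_add_toIocMod]
  set t := toIocMod Real.two_pi_pos (-Real.pi) w.im with ht
  have hmem : t ∈ Ioc (-Real.pi) (-Real.pi + 2 * Real.pi) := toIocMod_mem_Ioc _ _ _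
  have habs : t ^ 2 ≤ w.im ^ 2 := by
    by_cases him : w.im ∈ Ioc (-Real.pi) (-Real.pi + 2 * Real.pi)
    · rw [ht, (toIocMod_eq_self _).mpr him]
    · rw [mem_Ioc] at hmem him
      rw [sq_le_sq, abs_le]
      constructor <;> cases abs_cases w.im <;> grind
  rw [← sq_le_sq₀ (norm_nonneg _) (norm_nonneg _), Complex.sq_norm, Complex.sq_norm,
    normSq_apply, normSq_apply]
  simp only [add_re, ofReal_re, mul_re, I_re, I_im, add_im, ofReal_im, mul_im]
  nlinarith

lemma norm_log_div_le_add {x y z : ℂ} (hx : x ≠ 0) (hy : y ≠ 0) (hz : z ≠ 0) :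
    ‖log (z / x)‖ ≤ ‖log (z / y)‖ + ‖log (y / x)‖ := by
  have h : exp (log (z / y) + log (y / x)) = z / x := by
    rw [exp_add, exp_log (div_ne_zero hz hy), exp_log (div_ne_zero hy hx)]
    field_simp
  calc ‖log (z / x)‖ ≤ ‖log (z / y) + log (y / x)‖ := h ▸ norm_log_exp_le _
    _ ≤ _ := norm_add_le _ _

lemma mul_norm_one_sub_le_norm_mul_norm_sub {β : ℝ} (hβ0 : 0 ≤ β) (hβ1 : β ≤ 1) {w : ℂ}
    (hw : β ≤ ‖w‖ ^ 2) : β * ‖1 - w‖ ≤ ‖w‖ * ‖w - β‖ := by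
  have key : (‖w‖ * ‖w - β‖) ^ 2 - (β * ‖1 - w‖) ^ 2
      = (‖w‖ ^ 2 - β) * (‖w - β‖ ^ 2 + β * (1 - β)) := by
    simp only [mul_pow, Complex.sq_norm, normSq_apply, sub_re, sub_im, one_re, one_im, ofReal_re,
      ofReal_im]
    ring
  rw [← sq_le_sq₀ (by positivity) (by positivity)]
  nlinarith [mul_nonneg (sub_nonneg.2 hw) (add_nonneg (sq_nonneg ‖w - β‖)
    (mul_nonneg hβ0 (sub_nonneg.2 hβ1)))]

lemma lt_norm_of_le_sq_norm {β : ℝ} (hβ0 : 0 < β) (hβ1 : β < 1) {w : ℂ} (hw : β ≤ ‖w‖ ^ 2) :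
    β < ‖w‖ := by
  nlinarith [norm_nonneg w]

lemma re_one_sub_div_pos {β : ℝ} (hβ0 : 0 < β) (hβ1 : β < 1) {w : ℂ} (hw : β ≤ ‖w‖ ^ 2) :
    0 < (1 - β / w).re := by
  have hβw := lt_norm_of_le_sq_norm hβ0 hβ1 hw
  have hlt : ‖(β : ℂ) / w‖ < 1 := by
    rw [norm_div, norm_real, Real.norm_of_nonneg hβ0.le, div_lt_one (hβ0.trans hβw)]
    exact hβw
  rw [sub_re, one_re, sub_pos]
  exact (re_le_norm _).trans_lt hlt

lemma one_sub_div_ne_zero {β : ℝ} (hβ0 : 0 < β) (hβ1 : β < 1) {w : ℂ} (hw : β ≤ ‖w‖ ^ 2) :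
    1 - β / w ≠ 0 := fun h => by
  simpa [h] using re_one_sub_div_pos hβ0 hβ1 hw

lemma one_sub_div_eq_conj_one_sub {β : ℝ} {w : ℂ} (hw : ‖w‖ ^ 2 = β) :
    1 - β / w = conj (1 - w) := by
  rcases eq_or_ne w 0 with rfl | hw0
  · simp [← hw]
  · rw [map_sub, map_one, ← hw, ofReal_pow, ← mul_conj', mul_div_cancel_left₀ _ hw0]

lemma norm_log_one_sub_div_div_le_of_hasDerivAt {β K a b : ℝ} (hβ0 : 0 < β) (hβ1 : β < 1)
    (hK : 0 ≤ K) {w w' : ℝ → ℂ} (hab : a ≤ b) (hw : ∀ s ∈ Icc a b, HasDerivAt w (w' s) s)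
    (hw' : ∀ s ∈ Icc a b, ‖w' s‖ ≤ K * ‖1 - w s‖) (hext : ∀ s ∈ Icc a b, β ≤ ‖w s‖ ^ 2) :
    ‖log ((1 - β / w b) / (1 - β / w a))‖ ≤ K * (b - a) := by
  have hden : ∀ s ∈ Icc a b, 0 < ‖w s‖ * ‖w s - β‖ := fun s hs => by
    have := norm_sub_norm_le (w s) β
    rw [norm_real, Real.norm_of_nonneg hβ0.le] at this
    nlinarith [lt_norm_of_le_sq_norm hβ0 hβ1 (hext s hs)]
  have hL : ∀ s ∈ Icc a b, HasDerivAt (fun t => log (1 - β / w t))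
      (β * w' s / (w s * (w s - β))) s := by
    intro s hs
    have hws : w s * (w s - β) ≠ 0 := norm_pos_iff.mp (norm_mul (w s) _ ▸ hden s hs)
    have hw0 := left_ne_zero_of_mul hws
    have hwβ := right_ne_zero_of_mul hws
    have h := (((hasDerivAt_const s (β : ℂ)).div (hw s hs) hw0).const_sub 1).clog_real
      (Or.inl (re_one_sub_div_pos hβ0 hβ1 (hext s hs)))
    simp only [Pi.div_apply] at h
    convert h using 1
    field_simp
    ring
  have hbound : ∀ s ∈ Icc a b, ‖β * w' s / (w s * (w s - β))‖ ≤ K := by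
    intro s hs
    rw [norm_div, norm_mul, norm_mul, norm_real, Real.norm_of_nonneg hβ0.le,
      div_le_iff₀ (hden s hs)]
    calc β * ‖w' s‖ ≤ β * (K * ‖1 - w s‖) := mul_le_mul_of_nonneg_left (hw' s hs) hβ0.le
      _ = K * (β * ‖1 - w s‖) := by ring
      _ ≤ K * (‖w s‖ * ‖w s - β‖) := mul_le_mul_of_nonneg_left
        (mul_norm_one_sub_le_norm_mul_norm_sub hβ0.le hβ1.le (hext s hs)) hK
  have hmv := norm_image_sub_le_of_norm_deriv_le_segment'
    (fun s hs => (hL s hs).hasDerivWithinAt) (fun s hs => hbound s (Ico_subset_Icc_self hs))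
    b (right_mem_Icc.mpr hab)
  have hexp : exp (log (1 - β / w b) - log (1 - β / w a)) = (1 - β / w b) / (1 - β / w a) := by
    rw [exp_sub, exp_log (one_sub_div_ne_zero hβ0 hβ1 (hext b (right_mem_Icc.mpr hab))),
      exp_log (one_sub_div_ne_zero hβ0 hβ1 (hext a (left_mem_Icc.mpr hab)))]
  exact hexp ▸ (norm_log_exp_le _).trans hmv

lemma exists_first_zero_Icc {h : ℝ → ℝ} {a t : ℝ} (hat : a ≤ t)
    (hh : ContinuousOn h (Icc a t)) (ha : 0 ≤ h a) (ht : h t ≤ 0) :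
    ∃ σ ∈ Icc a t, h σ = 0 ∧ ∀ s ∈ Icc a σ, 0 ≤ h s := by
  set S := Icc a t ∩ h ⁻¹' Iic 0
  have hS : IsCompact S :=
    isCompact_Icc.of_isClosed_subset (hh.preimage_isClosed_of_isClosed isClosed_Icc isClosed_Iic)
      inter_subset_left
  have hσ : sInf S ∈ S := hS.sInf_mem ⟨t, right_mem_Icc.mpr hat, ht⟩
  have hmin : ∀ s ∈ Icc a (sInf S), h s ≤ 0 → s = sInf S := fun s hs hs0 =>
    le_antisymm hs.2 (csInf_le hS.bddBelow ⟨⟨hs.1, hs.2.trans hσ.1.2⟩, hs0⟩)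
  obtain ⟨ρ, hρ, hρ0⟩ := intermediate_value_Icc' hσ.1.1 (hh.mono (Icc_subset_Icc_right hσ.1.2))
    ⟨hσ.2, ha⟩
  have hρσ : ρ = sInf S := hmin ρ hρ hρ0.le
  refine ⟨sInf S, hσ.1, hρσ ▸ hρ0, fun s hs => le_of_not_gt fun hneg => ?_⟩
  exact hneg.ne ((hmin s hs hneg.le).trans hρσ.symm ▸ hρ0)

lemma exists_last_zero_Icc {h : ℝ → ℝ} {t b : ℝ} (htb : t ≤ b)
    (hh : ContinuousOn h (Icc t b)) (hb : 0 ≤ h b) (ht : h t ≤ 0) :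
    ∃ σ ∈ Icc t b, h σ = 0 ∧ ∀ s ∈ Icc σ b, 0 ≤ h s := by
  have hneg : ContinuousOn (fun s => h (-s)) (Icc (-b) (-t)) :=
    hh.comp continuousOn_neg fun s hs => by simp only [mem_Icc] at hs ⊢; constructor <;> linarith
  obtain ⟨σ, hσ, hσ0, hpos⟩ := exists_first_zero_Icc (neg_le_neg htb) hneg
    (by simpa using hb) (by simpa using ht)
  refine ⟨-σ, ⟨le_neg.mpr hσ.2, neg_le.mpr hσ.1⟩, hσ0, fun s hs => ?_⟩
  simpa using hpos (-s) ⟨neg_le_neg hs.2, neg_le.mpr hs.1⟩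

lemma norm_log_one_sub_div_div_le {β : ℝ} (hβ0 : 0 < β) (hβ1 : β < 1) {w₁ w₂ : ℂ}
    (h₁ : β ≤ ‖w₁‖ ^ 2) (h₂ : β ≤ ‖w₂‖ ^ 2) (hw₁ : 1 - w₁ ≠ 0) (hw₂ : 1 - w₂ ≠ 0) :
    ‖log ((1 - β / w₂) / (1 - β / w₁))‖ ≤ ‖log ((1 - w₂) / (1 - w₁))‖ := by
  set X := log ((1 - w₂) / (1 - w₁))
  set w : ℝ → ℂ := fun s => 1 - (1 - w₁) * exp (s * X)
  have hw0 : w 0 = w₁ := by simp [w]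
  have hw1 : w 1 = w₂ := by
    simp only [w, ofReal_one, one_mul, X, exp_log (div_ne_zero hw₂ hw₁)]
    field_simp
    ring
  have hderiv : ∀ s : ℝ, HasDerivAt w (-(X * (1 - w s))) s := fun s => by
    refine ((((hasDerivAt_mul_const X).cexp.comp_ofReal (z := s)).const_mul (1 - w₁)).const_sub
      1).congr_deriv ?_
    simp only [w]
    ring
  have hout : ∀ a b, a ≤ b → (∀ s ∈ Icc a b, β ≤ ‖w s‖ ^ 2) →
      ‖log ((1 - β / w b) / (1 - β / w a))‖ ≤ ‖X‖ * (b - a) := fun a b hab hext =>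
    norm_log_one_sub_div_div_le_of_hasDerivAt hβ0 hβ1 (norm_nonneg X) hab (fun s _ => hderiv s)
      (fun s _ => by rw [norm_neg, norm_mul]) hext
  have hin : ∀ a b, a ≤ b → ‖log (conj (1 - w b) / conj (1 - w a))‖ ≤ ‖X‖ * (b - a) := by
    intro a b hab
    have : conj (1 - w b) / conj (1 - w a) = exp (conj (((b - a : ℝ) : ℂ) * X)) := by
      rw [exp_conj, ← map_div₀]
      simp only [w, sub_sub_cancel, ofReal_sub, sub_mul, exp_sub]
      field_simp
    rw [this]
    calc _ ≤ ‖conj (((b - a : ℝ) : ℂ) * X)‖ := norm_log_exp_le _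
      _ = ‖X‖ * (b - a) := by
        rw [RCLike.norm_conj, norm_mul, norm_real, Real.norm_of_nonneg (sub_nonneg.2 hab),
          mul_comm]
  by_cases hall : ∀ s ∈ Icc (0 : ℝ) 1, β ≤ ‖w s‖ ^ 2
  · simpa [hw0, hw1] using hout 0 1 zero_le_one hall
  push Not at hall
  obtain ⟨t, ht, hlt⟩ := hall
  have hcont : Continuous fun s => ‖w s‖ ^ 2 - β := by fun_prop
  obtain ⟨σ₁, hσ₁, hσ₁0, hpos₁⟩ := exists_first_zero_Icc ht.1 hcont.continuousOn
    (by simpa [hw0] using h₁) (by linarith)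
  obtain ⟨σ₂, hσ₂, hσ₂0, hpos₂⟩ := exists_last_zero_Icc ht.2 hcont.continuousOn
    (by simpa [hw1] using h₂) (by linarith)
  have hfirst := hout 0 σ₁ hσ₁.1 fun s hs => sub_nonneg.mp (hpos₁ s hs)
  have hmid : ‖log ((1 - β / w σ₂) / (1 - β / w σ₁))‖ ≤ ‖X‖ * (σ₂ - σ₁) := by
    rw [one_sub_div_eq_conj_one_sub (sub_eq_zero.mp hσ₁0),
      one_sub_div_eq_conj_one_sub (sub_eq_zero.mp hσ₂0)]
    exact hin σ₁ σ₂ (hσ₁.2.trans hσ₂.1)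
  have hlast := hout σ₂ 1 hσ₂.2 fun s hs => sub_nonneg.mp (hpos₂ s hs)
  rw [← hw0] at h₁ ⊢
  rw [← hw1] at h₂ ⊢
  have hne := fun s (hs : β ≤ ‖w s‖ ^ 2) => one_sub_div_ne_zero hβ0 hβ1 hs
  have hσ₁' := (sub_eq_zero.mp hσ₁0).ge
  have hσ₂' := (sub_eq_zero.mp hσ₂0).ge
  calc _ ≤ ‖log ((1 - β / w 1) / (1 - β / w σ₂))‖ + ‖log ((1 - β / w σ₂) / (1 - β / w 0))‖ :=
        norm_log_div_le_add (hne 0 h₁) (hne σ₂ hσ₂') (hne 1 h₂)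
    _ ≤ ‖log ((1 - β / w 1) / (1 - β / w σ₂))‖ + (‖log ((1 - β / w σ₂) / (1 - β / w σ₁))‖
          + ‖log ((1 - β / w σ₁) / (1 - β / w 0))‖) :=
        add_le_add_right (norm_log_div_le_add (hne 0 h₁) (hne σ₁ hσ₁') (hne σ₂ hσ₂')) _
    _ ≤ ‖X‖ * (1 - σ₂) + (‖X‖ * (σ₂ - σ₁) + ‖X‖ * (σ₁ - 0)) := by gcongr
    _ = ‖X‖ := by ring

lemma injOn_one_sub_mul_cpow {β τ : ℝ} (hβ0 : 0 < β) (hβ1 : β < 1) (hτ : |τ| < 1) :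
    InjOn (fun w : ℂ => (1 - w) * (1 - β / w) ^ (τ : ℂ)) {w | β ≤ ‖w‖ ^ 2} := by
  intro w₁ h₁ w₂ h₂ heq
  have hne : ∀ w : ℂ, β ≤ ‖w‖ ^ 2 → 1 - β / w ≠ 0 := fun w hw => one_sub_div_ne_zero hβ0 hβ1 hw
  have hcpow : ∀ w : ℂ, β ≤ ‖w‖ ^ 2 → (1 - β / w) ^ (τ : ℂ) = exp (τ * log (1 - β / w)) :=
    fun w hw => by rw [cpow_def_of_ne_zero (hne w hw), mul_comm]
  simp only [hcpow w₁ h₁, hcpow w₂ h₂] at heq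
  set L₁ := log (1 - β / w₁)
  set L₂ := log (1 - β / w₂)
  have hzero : 1 - w₁ = 0 ↔ 1 - w₂ = 0 := by
    rw [← mul_eq_zero_iff_right (exp_ne_zero (τ * L₁)), heq, mul_eq_zero_iff_right (exp_ne_zero _)]
  by_cases hw₁ : 1 - w₁ = 0
  · exact (sub_eq_zero.mp hw₁).symm.trans (sub_eq_zero.mp (hzero.mp hw₁))
  have hw₂ : 1 - w₂ ≠ 0 := fun h => hw₁ (hzero.mpr h)
  have him : ∀ w : ℂ, β ≤ ‖w‖ ^ 2 → |(log (1 - β / w)).im| < Real.pi / 2 := fun w hw => by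
    rw [log_im]; exact abs_arg_lt_pi_div_two_iff.mpr (Or.inl (re_one_sub_div_pos hβ0 hβ1 hw))
  have hL : log ((1 - β / w₂) / (1 - β / w₁)) = L₂ - L₁ := by
    rw [← exp_log (hne w₁ h₁), ← exp_log (hne w₂ h₂), ← exp_sub, log_exp] <;>
      simp only [sub_im] <;> linarith [abs_lt.mp (him w₁ h₁), abs_lt.mp (him w₂ h₂)]
  have hratio : (1 - w₂) / (1 - w₁) = exp (τ * (L₁ - L₂)) := by
    rw [mul_sub, exp_sub, div_eq_div_iff hw₁ (exp_ne_zero _)]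
    linear_combination -heq
  have hle : ‖L₂ - L₁‖ ≤ |τ| * ‖L₂ - L₁‖ :=
    calc ‖L₂ - L₁‖ = ‖log ((1 - β / w₂) / (1 - β / w₁))‖ := by rw [hL]
      _ ≤ ‖log ((1 - w₂) / (1 - w₁))‖ := norm_log_one_sub_div_div_le hβ0 hβ1 h₁ h₂ hw₁ hw₂
      _ ≤ ‖τ * (L₁ - L₂)‖ := hratio ▸ norm_log_exp_le _
      _ = |τ| * ‖L₂ - L₁‖ := by rw [norm_mul, norm_sub_rev, norm_real, Real.norm_eq_abs]
  have hL₁₂ : L₂ = L₁ := by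
    have : ‖L₂ - L₁‖ = 0 := by nlinarith [norm_nonneg (L₂ - L₁)]
    exact sub_eq_zero.mp (norm_eq_zero.mp this)
  have : (β : ℂ) / w₁ = β / w₂ := by
    have := congrArg exp hL₁₂
    rw [exp_log (hne w₁ h₁), exp_log (hne w₂ h₂)] at this
    linear_combination this
  simpa [div_eq_mul_inv, hβ0.ne'] using this

lemma abs_div_sub_one_lt_one {x y : ℝ} (hx : 0 < x) (hxy : x < 2 * y) : |x / y - 1| < 1 := by
  have hy : 0 < y := by linarith
  have hxy' : x / y < 2 := (div_lt_iff₀ hy).mpr (by linarith)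
  rw [abs_lt]
  constructor <;> linarith [div_pos hx hy]

theorem postcritical_map_injective (n d : ℕ) (hd : 0 < d) (hdn : d < 2 * n)
    (r : ℝ) (hr : 0 < r) (α : ℂ) (hα0 : 0 < ‖α‖) (hα1 : ‖α‖ < 1) :
    Set.InjOn
      (fun u : ℂ => (r : ℂ) * (u - 1 / (starRingEnd ℂ α)) * (1 - α / u) ^ ((d : ℂ) / (n : ℂ) - 1))
      {u : ℂ | 1 ≤ ‖u‖} := by
  intro u₁ hu₁ u₂ hu₂ heq
  have hα : conj α ≠ 0 := (map_ne_zero _).mpr (norm_pos_iff.mp hα0)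
  have hf : ∀ u : ℂ, (r : ℂ) * (u - 1 / conj α) * (1 - α / u) ^ ((d : ℂ) / n - 1) =
      -(r / conj α) * ((1 - conj α * u) *
        (1 - (‖α‖ ^ 2 : ℝ) / (conj α * u)) ^ ((d / n - 1 : ℝ) : ℂ)) := by
    intro u
    have hβ : ((‖α‖ ^ 2 : ℝ) : ℂ) / (conj α * u) = α / u := by
      rw [ofReal_pow, ← mul_conj', mul_comm (conj α), mul_div_mul_right _ _ hα]
    rw [hβ]
    push_cast
    field_simp
    ring
  have hmem : ∀ u : ℂ, 1 ≤ ‖u‖ → conj α * u ∈ {w : ℂ | ‖α‖ ^ 2 ≤ ‖w‖ ^ 2} := fun u hu => by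
    show ‖α‖ ^ 2 ≤ ‖conj α * u‖ ^ 2
    rw [norm_mul, RCLike.norm_conj, mul_pow]
    exact le_mul_of_one_le_right (by positivity) (one_le_pow₀ hu)
  have hτ := abs_div_sub_one_lt_one (x := d) (y := n) (by exact_mod_cast hd) (by exact_mod_cast hdn)
  have hF := injOn_one_sub_mul_cpow (by positivity) (by nlinarith) hτ (hmem u₁ hu₁) (hmem u₂ hu₂)
    (mul_left_cancel₀ (by simp [hr.ne', hα]) ((hf u₁).symm.trans (heq.trans (hf u₂))))
  exact mul_left_cancel₀ hα hF
end

section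
/- Let n and d be positive integers with 0 < d < 2n, let a be real with 0 < a < 1, and let θ ∈ ℝ. Then the complex number (1 − a·e^{iθ})·(1 − a·e^{−iθ})^{d/n − 1}, where the complex power is the principal branch (well defined since Re(1 − a·e^{−iθ}) > 0), is real if and only if sin θ = 0. -/
/-!
Write `w = 1 - a e^{iθ}`; then the second factor is `conj w`, and `Re w = 1 - a cos θ > 0`, so
`φ = arg w ∈ (-π/2, π/2)`. With `s = d/n - 1 ∈ (-1, 1)` the product is
`w · conj w ^ s = |w|^{1+s} e^{i(1-s)φ}`, and since `|(1-s)φ| < π` it is real iff `φ = 0`,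
i.e. iff `Im w = -a sin θ = 0`.
-/

open Complex ComplexConjugate

namespace Complex

lemma mul_conj_cpow_ofReal {w : ℂ} (hw : w ≠ 0) (harg : arg w ≠ Real.pi) (s : ℝ) :
    w * conj w ^ (s : ℂ) = ((‖w‖ ^ (1 + s) : ℝ) : ℂ) * exp (((1 - s) * arg w : ℝ) * I) := by
  have hr : 0 < ‖w‖ := norm_pos_iff.mpr hw
  rw [cpow_def_of_ne_zero ((map_ne_zero conj).mpr hw), log, norm_conj, arg_conj, if_neg harg,
    Real.rpow_add hr, Real.rpow_one, Real.rpow_def_of_pos hr]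
  nth_rewrite 1 [← norm_mul_exp_arg_mul_I w]
  push_cast
  rw [mul_assoc, mul_assoc, ← exp_add, ← exp_add]
  ring_nf

lemma im_mul_conj_cpow_ofReal_eq_zero_iff {w : ℂ} (hre : 0 < w.re) {s : ℝ} (hs₁ : -1 < s)
    (hs₂ : s < 1) : (w * conj w ^ (s : ℂ)).im = 0 ↔ w.im = 0 := by
  have hw : w ≠ 0 := fun h => by simp [h] at hre
  have harg : |arg w| < Real.pi / 2 := abs_arg_lt_pi_div_two_iff.mpr (Or.inl hre)
  have harg_ne : arg w ≠ Real.pi := fun h => by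
    rw [h, abs_of_pos Real.pi_pos] at harg; linarith [Real.pi_pos]
  -- on `(-π, π)` the only zero of `sin` is `0`
  have hangle : |(1 - s) * arg w| < Real.pi := by
    rw [abs_mul, abs_of_pos (by linarith : 0 < 1 - s)]
    nlinarith [abs_nonneg (arg w)]
  rw [abs_lt] at hangle
  rw [mul_conj_cpow_ofReal hw harg_ne, im_ofReal_mul, exp_ofReal_mul_I_im,
    mul_eq_zero, Real.sin_eq_zero_iff_of_lt_of_lt hangle.1 hangle.2, mul_eq_zero,
    or_iff_right (by linarith : 1 - s ≠ 0), or_iff_right (by positivity), arg_eq_zero_iff,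
    and_iff_right hre.le]

end Complex

lemma re_one_sub_mul_exp_mul_I (a θ : ℝ) : (1 - (a : ℂ) * exp (I * θ)).re = 1 - a * Real.cos θ := by
  simp [mul_comm I, exp_ofReal_mul_I_re]

lemma im_one_sub_mul_exp_mul_I (a θ : ℝ) : (1 - (a : ℂ) * exp (I * θ)).im = -(a * Real.sin θ) := by
  simp [mul_comm I, exp_ofReal_mul_I_im]

lemma conj_one_sub_mul_exp_mul_I (a θ : ℝ) :
    conj (1 - (a : ℂ) * exp (I * θ)) = 1 - (a : ℂ) * exp (-(I * θ)) := by
  simp [← exp_conj]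

theorem real_on_circle_iff (n d : ℕ) (hd : 0 < d) (hdn : d < 2 * n)
    (a : ℝ) (ha0 : 0 < a) (ha1 : a < 1) (θ : ℝ) :
    ((1 - (a : ℂ) * Complex.exp (Complex.I * θ)) *
        (1 - (a : ℂ) * Complex.exp (-(Complex.I * θ))) ^ ((d : ℂ) / (n : ℂ) - 1)).im = 0 ↔
      Real.sin θ = 0 := by
  have hn : (0 : ℝ) < n := by exact_mod_cast (by omega : 0 < n)
  have hre : 0 < (1 - (a : ℂ) * exp (I * θ)).re := by
    rw [re_one_sub_mul_exp_mul_I]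
    nlinarith [Real.cos_le_one θ, Real.neg_one_le_cos θ]
  have hexp : (d : ℂ) / n - 1 = ((d / n - 1 : ℝ) : ℂ) := by push_cast; rfl
  have hlo : -1 < (d : ℝ) / n - 1 := by
    have : 0 < (d : ℝ) / n := by positivity
    linarith
  have hhi : (d : ℝ) / n - 1 < 1 := by
    rw [sub_lt_iff_lt_add, one_add_one_eq_two, div_lt_iff₀ hn]
    exact_mod_cast hdn
  rw [← conj_one_sub_mul_exp_mul_I, hexp, im_mul_conj_cpow_ofReal_eq_zero_iff hre hlo hhi,
    im_one_sub_mul_exp_mul_I, neg_eq_zero, mul_eq_zero, or_iff_right ha0.ne']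
end

section
/- Let n and d be positive integers with 0 < d < n, let T > 0, and let t ∈ ℂ satisfy 0 < |t| < t_cr, where t_cr = (n/d)·(T/(2n−d))^{(2n−d)/(2n)}. Then the equation r^{4n/d − 2} − (T/n)·r^{2n/d − 2} + ((n−d)/n)·(d²/n²)·|t|² = 0 (with real powers of r) has exactly two solutions r in (0, ∞); denoting them r_− < r_+, they satisfy 0 < r_− < r_min < r_+ < (T/n)^{d/(2n)}, where r_min = ((T/n)·(n−d)/(2n−d))^{d/(2n)}. -/
/-!
Substituting `x = r ^ (2n/d)` and `p = d/n ∈ (0, 1)` turns the equation into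
`x ^ (2 - p) - (T/n) x ^ (1 - p) + c = 0` with `c > 0`. The left side equals `c` at `x = 0` and at
`x = T/n`, and its derivative `x ^ (-p) ((2 - p) x - (T/n)(1 - p))` shows that it decreases up to
`m = (T/n)(1 - p)/(2 - p)` and increases afterwards, so it has exactly two positive zeros, one on
each side of `m`, precisely when its minimum value is negative. That minimum is
`c - (1 - p) ^ (1 - p) (T/(2n - d)) ^ (2 - p)`, and `|t| < t_cr` makes it negative.
-/

open Real Set

lemma exists_two_zeros_of_strictAntiOn_of_strictMonoOn {f : ℝ → ℝ} {a m b : ℝ}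
    (ham : a ≤ m) (hmb : m ≤ b) (hf : ContinuousOn f (Icc a b))
    (hanti : StrictAntiOn f (Icc a m)) (hmono : StrictMonoOn f (Ici m))
    (ha : 0 < f a) (hm : f m < 0) (hb : 0 < f b) :
    ∃ xm xp, xm ∈ Ioo a m ∧ xp ∈ Ioo m b ∧ f xm = 0 ∧ f xp = 0 ∧
      ∀ x, a ≤ x → f x = 0 → x = xm ∨ x = xp := by
  obtain ⟨xm, hxm, hfxm⟩ : ∃ xm ∈ Ioo a m, f xm = 0 :=
    intermediate_value_Ioo' ham (hf.mono (Icc_subset_Icc le_rfl hmb)) ⟨hm, ha⟩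
  obtain ⟨xp, hxp, hfxp⟩ : ∃ xp ∈ Ioo m b, f xp = 0 :=
    intermediate_value_Ioo hmb (hf.mono (Icc_subset_Icc ham le_rfl)) ⟨hm, hb⟩
  refine ⟨xm, xp, hxm, hxp, hfxm, hfxp, fun x hax hfx => ?_⟩
  rcases le_total x m with hxm' | hmx
  · exact .inl (hanti.injOn ⟨hax, hxm'⟩ (Ioo_subset_Icc_self hxm) (hfx.trans hfxm.symm))
  · exact .inr (hmono.injOn hmx (le_of_lt hxp.1) (hfx.trans hfxp.symm))

lemma exists_two_zeros_comp_rpow {f : ℝ → ℝ} {s m b xm xp : ℝ} (hs : 0 < s)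
    (hxm : xm ∈ Ioo 0 m) (hxp : xp ∈ Ioo m b) (hfxm : f xm = 0) (hfxp : f xp = 0)
    (hzeros : ∀ x, 0 < x → f x = 0 → x = xm ∨ x = xp) :
    ∃ rm rp : ℝ, f (rm ^ s) = 0 ∧ f (rp ^ s) = 0 ∧ 0 < rm ∧ rm < m ^ s⁻¹ ∧
      m ^ s⁻¹ < rp ∧ rp < b ^ s⁻¹ ∧
      ∀ r, 0 < r → f (r ^ s) = 0 → r = rm ∨ r = rp := by
  have hxp0 : 0 < xp := hxm.1.trans (hxm.2.trans hxp.1)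
  refine ⟨xm ^ s⁻¹, xp ^ s⁻¹, ?_, ?_, rpow_pos_of_pos hxm.1 _,
    rpow_lt_rpow hxm.1.le hxm.2 (inv_pos.2 hs), rpow_lt_rpow (hxm.1.trans hxm.2).le hxp.1
    (inv_pos.2 hs), rpow_lt_rpow hxp0.le hxp.2 (inv_pos.2 hs), fun r hr hfr => ?_⟩
  · rwa [rpow_inv_rpow hxm.1.le hs.ne']
  · rwa [rpow_inv_rpow hxp0.le hs.ne']
  · rw [← rpow_rpow_inv hr.le hs.ne']
    rcases hzeros _ (rpow_pos_of_pos hr s) hfr with h | h <;> simp only [h, true_or, or_true]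

/-- The equation in the variable `x = r ^ (2n/d)`, with `a = T/n` and `p = d/n`. -/
noncomputable def rpowValley (a c p x : ℝ) : ℝ := x ^ (2 - p) - a * x ^ (1 - p) + c

section rpowValley

variable {a c p : ℝ}

lemma rpowValley_comp_rpow {s r : ℝ} (hs : s ≠ 0) (hr : 0 ≤ r) :
    rpowValley a c (2 / s) (r ^ s) = r ^ (2 * s - 2) - a * r ^ (s - 2) + c := by
  rw [rpowValley, ← rpow_mul hr, ← rpow_mul hr]
  congr 4 <;> field_simp

lemma rpowValley_eq_mul {x : ℝ} (hx : 0 < x) :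
    rpowValley a c p x = x ^ (1 - p) * (x - a) + c := by
  rw [rpowValley, show 2 - p = 1 + (1 - p) by ring, rpow_add hx, rpow_one]
  ring

lemma continuous_rpowValley (hp : p ≤ 1) : Continuous (rpowValley a c p) :=
  ((continuous_rpow_const (by linarith)).sub
    (continuous_const.mul (continuous_rpow_const (by linarith)))).add continuous_const

lemma rpowValley_zero (hp : p < 1) : rpowValley a c p 0 = c := by
  simp [rpowValley, zero_rpow (show 2 - p ≠ 0 by linarith),
    zero_rpow (show 1 - p ≠ 0 by linarith)]

lemma rpowValley_self (ha : 0 < a) : rpowValley a c p a = c := by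
  simp [rpowValley_eq_mul ha]

lemma hasDerivAt_rpowValley (hp : p ≠ 2) {x : ℝ} (hx : 0 < x) :
    HasDerivAt (rpowValley a c p) (x ^ (-p) * (2 - p) * (x - a * ((1 - p) / (2 - p)))) x := by
  have h : HasDerivAt (rpowValley a c p)
      ((2 - p) * x ^ (2 - p - 1) - a * ((1 - p) * x ^ (1 - p - 1))) x :=
    ((hasDerivAt_rpow_const (.inl hx.ne')).sub
      ((hasDerivAt_rpow_const (.inl hx.ne')).const_mul a)).add_const c
  convert h using 1
  rw [show 2 - p - 1 = 1 + -p by ring, show 1 - p - 1 = -p by ring, rpow_add hx, rpow_one]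
  field_simp [sub_ne_zero.2 hp.symm]

lemma rpowValley_strictAntiOn (hp : p < 1) :
    StrictAntiOn (rpowValley a c p) (Icc 0 (a * ((1 - p) / (2 - p)))) := by
  refine strictAntiOn_of_deriv_neg (convex_Icc _ _) (continuous_rpowValley hp.le).continuousOn
    fun x hx => ?_
  rw [interior_Icc] at hx
  rw [(hasDerivAt_rpowValley (by linarith) hx.1).deriv]
  exact mul_neg_of_pos_of_neg (mul_pos (rpow_pos_of_pos hx.1 _) (by linarith))
    (sub_neg.2 hx.2)

lemma rpowValley_strictMonoOn (hp : p < 1) (ha : 0 < a) :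
    StrictMonoOn (rpowValley a c p) (Ici (a * ((1 - p) / (2 - p)))) := by
  have hm : 0 < a * ((1 - p) / (2 - p)) := mul_pos ha (div_pos (by linarith) (by linarith))
  refine strictMonoOn_of_deriv_pos (convex_Ici _) (continuous_rpowValley hp.le).continuousOn
    fun x hx => ?_
  rw [interior_Ici] at hx
  rw [(hasDerivAt_rpowValley (by linarith) (hm.trans hx)).deriv]
  exact mul_pos (mul_pos (rpow_pos_of_pos (hm.trans hx) _) (by linarith)) (sub_pos.2 hx)

lemma rpowValley_min (hp : p < 1) (ha : 0 < a) :
    rpowValley a c p (a * ((1 - p) / (2 - p))) =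
      c - (1 - p) ^ (1 - p) * (a / (2 - p)) ^ (2 - p) := by
  have h1p : 0 < 1 - p := by linarith
  have h2p : 2 - p ≠ 0 := by linarith
  have hq : 0 < a / (2 - p) := div_pos ha (by linarith)
  have hq2 : (a / (2 - p)) ^ (2 - p) = (a / (2 - p)) ^ (1 - p) * (a / (2 - p)) := by
    rw [← rpow_add_one hq.ne']; ring_nf
  rw [rpowValley_eq_mul (mul_pos ha (div_pos h1p (by linarith))),
    show a * ((1 - p) / (2 - p)) = (1 - p) * (a / (2 - p)) by ring, mul_rpow h1p.le hq.le, hq2]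
  field_simp
  ring

lemma exists_two_zeros_rpowValley (hp : p < 1) (ha : 0 < a) (hc : 0 < c)
    (hcrit : c < (1 - p) ^ (1 - p) * (a / (2 - p)) ^ (2 - p)) :
    ∃ xm xp, xm ∈ Ioo 0 (a * ((1 - p) / (2 - p))) ∧ xp ∈ Ioo (a * ((1 - p) / (2 - p))) a ∧
      rpowValley a c p xm = 0 ∧ rpowValley a c p xp = 0 ∧
      ∀ x, 0 < x → rpowValley a c p x = 0 → x = xm ∨ x = xp := by
  have hm : 0 < a * ((1 - p) / (2 - p)) := mul_pos ha (div_pos (by linarith) (by linarith))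
  have hma : a * ((1 - p) / (2 - p)) ≤ a :=
    mul_le_of_le_one_right ha.le ((div_le_one (by linarith)).2 (by linarith))
  obtain ⟨xm, xp, hxm, hxp, hfxm, hfxp, hzeros⟩ :=
    exists_two_zeros_of_strictAntiOn_of_strictMonoOn (f := rpowValley a c p) hm.le hma
      (continuous_rpowValley hp.le).continuousOn (rpowValley_strictAntiOn hp)
      (rpowValley_strictMonoOn hp ha) (by rwa [rpowValley_zero hp])
      (by rw [rpowValley_min hp ha]; linarith) (by rwa [rpowValley_self ha])
  exact ⟨xm, xp, hxm, hxp, hfxm, hfxp, fun x hx => hzeros x hx.le⟩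

end rpowValley

lemma coeff_lt_of_lt_critical {n d T τ : ℝ} (hd : 0 < d) (hdn : d < n) (hT : 0 < T)
    (hτ : 0 ≤ τ)
    (hτcr : τ < n / d * (T / (2 * n - d)) ^ ((2 * n - d) / (2 * n))) :
    (n - d) / n * (d ^ 2 / n ^ 2) * τ ^ 2 <
      (1 - d / n) ^ (1 - d / n) * (T / n / (2 - d / n)) ^ (2 - d / n) := by
  have hn : 0 < n := hd.trans hdn
  have h1p : 0 < 1 - d / n := sub_pos.2 ((div_lt_one hn).2 hdn)
  have hq : 0 < T / (2 * n - d) := div_pos hT (by linarith)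
  have hpτ : d / n * τ < (T / (2 * n - d)) ^ ((2 - d / n) / 2) := by
    have := mul_lt_mul_of_pos_left hτcr (div_pos hd hn)
    rwa [← mul_assoc, div_mul_div_cancel₀' hd.ne', div_self hn.ne', one_mul,
      show (2 * n - d) / (2 * n) = (2 - d / n) / 2 by field_simp] at this
  have hsq : (d / n * τ) ^ 2 < (T / (2 * n - d)) ^ (2 - d / n) := by
    calc (d / n * τ) ^ 2 < ((T / (2 * n - d)) ^ ((2 - d / n) / 2)) ^ 2 :=
          pow_lt_pow_left₀ hpτ (by positivity) two_ne_zero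
      _ = (T / (2 * n - d)) ^ (2 - d / n) := by
          rw [← rpow_natCast, ← rpow_mul hq.le]; norm_num
  calc (n - d) / n * (d ^ 2 / n ^ 2) * τ ^ 2 = (1 - d / n) * (d / n * τ) ^ 2 := by
        field_simp
    _ < (1 - d / n) * (T / (2 * n - d)) ^ (2 - d / n) := mul_lt_mul_of_pos_left hsq h1p
    _ ≤ (1 - d / n) ^ (1 - d / n) * (T / n / (2 - d / n)) ^ (2 - d / n) := by
        rw [show T / n / (2 - d / n) = T / (2 * n - d) by field_simp]
        gcongr
        have hp : 0 < d / n := div_pos hd hn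
        exact self_le_rpow_of_le_one h1p.le (by linarith) (by linarith)

theorem two_solutions_precritical (n d : ℕ) (hd : 0 < d) (hdn : d < n)
    (T : ℝ) (hT : 0 < T) (t : ℂ) (ht0 : 0 < ‖t‖)
    (htcr : ‖t‖ <
      ((n : ℝ) / d) * (T / (2 * (n : ℝ) - d)) ^ ((2 * (n : ℝ) - d) / (2 * n))) :
    ∃ rm rp : ℝ,
      rm ^ (4 * (n : ℝ) / d - 2) - (T / n) * rm ^ (2 * (n : ℝ) / d - 2) +
          (((n : ℝ) - d) / n) * ((d : ℝ) ^ 2 / (n : ℝ) ^ 2) * ‖t‖ ^ 2 = 0 ∧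
      rp ^ (4 * (n : ℝ) / d - 2) - (T / n) * rp ^ (2 * (n : ℝ) / d - 2) +
          (((n : ℝ) - d) / n) * ((d : ℝ) ^ 2 / (n : ℝ) ^ 2) * ‖t‖ ^ 2 = 0 ∧
      0 < rm ∧
      rm < ((T / n) * (((n : ℝ) - d) / (2 * (n : ℝ) - d))) ^ ((d : ℝ) / (2 * n)) ∧
      ((T / n) * (((n : ℝ) - d) / (2 * (n : ℝ) - d))) ^ ((d : ℝ) / (2 * n)) < rp ∧
      rp < (T / (n : ℝ)) ^ ((d : ℝ) / (2 * n)) ∧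
      ∀ r : ℝ, 0 < r →
        r ^ (4 * (n : ℝ) / d - 2) - (T / n) * r ^ (2 * (n : ℝ) / d - 2) +
            (((n : ℝ) - d) / n) * ((d : ℝ) ^ 2 / (n : ℝ) ^ 2) * ‖t‖ ^ 2 = 0 →
          r = rm ∨ r = rp := by
  have hd' : (0 : ℝ) < d := by exact_mod_cast hd
  have hdn' : (d : ℝ) < n := by exact_mod_cast hdn
  have hn' : (0 : ℝ) < n := hd'.trans hdn'
  have hs : (0 : ℝ) < 2 * n / d := by positivity
  have hp : 2 / (2 * n / d : ℝ) = d / n := by field_simp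
  set c : ℝ := ((n : ℝ) - d) / n * ((d : ℝ) ^ 2 / (n : ℝ) ^ 2) * ‖t‖ ^ 2
  have hc : 0 < c := mul_pos (mul_pos (div_pos (by linarith) hn') (by positivity)) (by positivity)
  have hcomp (r : ℝ) (hr : 0 < r) :
      rpowValley (T / n) c (d / n) (r ^ (2 * n / d : ℝ)) =
      r ^ (4 * (n : ℝ) / d - 2) - T / n * r ^ (2 * (n : ℝ) / d - 2) + c := by
    rw [← hp, rpowValley_comp_rpow hs.ne' hr.le]
    ring_nf
  obtain ⟨xm, xp, hxm, hxp, hfxm, hfxp, hzeros⟩ := exists_two_zeros_rpowValley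
    ((div_lt_one hn').2 hdn') (div_pos hT hn') hc
    (coeff_lt_of_lt_critical hd' hdn' hT (norm_nonneg t) htcr)
  rw [show T / n * ((1 - d / n) / (2 - d / n)) = T / n * ((n - d) / (2 * n - d)) by
    field_simp] at hxm hxp
  obtain ⟨rm, rp, hfrm, hfrp, hrm, hrm_lt, hrp_gt, hrp_lt, hzeros'⟩ :=
    exists_two_zeros_comp_rpow hs hxm hxp hfxm hfxp hzeros
  rw [inv_div] at hrm_lt hrp_gt hrp_lt
  refine ⟨rm, rp, ?_, ?_, hrm, hrm_lt, hrp_gt, hrp_lt, fun r hr hfr => hzeros' r hr ?_⟩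
  · rwa [← hcomp rm hrm]
  · rwa [← hcomp rp (hrm.trans (hrm_lt.trans hrp_gt))]
  · rwa [hcomp r hr]
end

section
/- Let n and d be positive integers with 0 < d < n, let T > 0, and let t ∈ ℂ satisfy 0 < |t| < t_cr, where t_cr = (n/d)·(T/(2n−d))^{(2n−d)/(2n)}. Let r_− < r_+ be the two solutions in (0, ∞) of r^{4n/d − 2} − (T/n)·r^{2n/d − 2} + ((n−d)/n)·(d²/n²)·|t|² = 0. Then (d/n)·|t|·r_+^{1 − 2n/d} < 1 and (d/n)·|t|·r_−^{1 − 2n/d} > 1; that is, the parameter α = −(d/n)·t̄·r^{1 − 2n/d} satisfies |α| < 1 for r = r_+ and |α| > 1 for r = r_−. -/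
/-! With `p = 2n/d`, `c = (n - d)/n`, `k = T/n` and `u = (d/n)‖t‖ r^(1-p)` (so `|α| = u`),
multiplying the equation by `r^(2-p)` turns it into `r^p (1 + c u²) = k`. Hence `r < r_min`
exactly when `u > 1/c > 1`, which settles the lower root, and `r > r_min` exactly when `u < 1/c`.
For the upper root, `(d/n)‖t‖ = u r^(p-1) = k^β u / (1 + c u²)^β` with `β = 1 - 1/p`; for
`1 ≤ u ≤ 1/c` we have `1 + c u² ≤ (1 + c) u` and `u^β ≤ u`, so this is at least
`(k/(1 + c))^β = (d/n) t_cr`. Thus `‖t‖ < t_cr` forces `u < 1`. -/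

theorem rpow_mul_one_add_sq_eq_of_root {p k c b r : ℝ} (hr : 0 < r)
    (h : r ^ (2 * p - 2) - k * r ^ (p - 2) + c * b ^ 2 = 0) :
    r ^ p * (1 + c * (b * r ^ (1 - p)) ^ 2) = k := by
  have hrp : 0 < r ^ p := Real.rpow_pos_of_pos hr p
  have h₁ : r ^ (p - 2) = r ^ p / r ^ 2 := by rw [Real.rpow_sub hr, Real.rpow_two]
  have h₂ : r ^ (2 * p - 2) = r ^ p * (r ^ p / r ^ 2) := by
    rw [← h₁, ← Real.rpow_add hr]; ring_nf
  have h₃ : r ^ (1 - p) = r / r ^ p := by rw [Real.rpow_sub hr, Real.rpow_one]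
  rw [h₁, h₂] at h
  rw [h₃]
  field_simp at h ⊢
  linear_combination h

theorem inv_lt_of_lt_threshold {c k X u : ℝ} (hc : 0 < c) (hX : 0 < X) (hu : 0 ≤ u)
    (h : X * (1 + c * u ^ 2) = k) (hlt : X < k * c / (1 + c)) : c⁻¹ < u := by
  rw [lt_div_iff₀ (by positivity), ← h] at hlt
  have hsq : 1 < (c * u) ^ 2 := by nlinarith
  rwa [inv_lt_iff_one_lt_mul₀' hc, ← one_lt_sq_iff₀ (by positivity)]

theorem lt_inv_of_threshold_lt {c k X u : ℝ} (hc : 0 < c) (hX : 0 < X)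
    (h : X * (1 + c * u ^ 2) = k) (hlt : k * c / (1 + c) < X) : u < c⁻¹ := by
  rw [div_lt_iff₀ (by positivity), ← h] at hlt
  have hsq : (c * u) ^ 2 < 1 := by nlinarith
  rw [← one_div, lt_div_iff₀' hc]
  exact (abs_lt.mp ((sq_lt_one_iff_abs_lt_one _).mp hsq)).2

theorem one_add_mul_sq_div_rpow_le {c β u : ℝ} (hc : 0 < c) (hβ0 : 0 ≤ β) (hβ1 : β ≤ 1)
    (hu1 : 1 ≤ u) (huc : u ≤ c⁻¹) : ((1 + c * u ^ 2) / (1 + c)) ^ β ≤ u := by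
  have hcu : c * u ≤ 1 := by rwa [← one_div, le_div_iff₀' hc] at huc
  have hq : (1 + c * u ^ 2) / (1 + c) ≤ u := by
    rw [div_le_iff₀ (by positivity)]
    nlinarith [mul_nonneg (sub_nonneg.mpr hcu) (sub_nonneg.mpr hu1)]
  calc ((1 + c * u ^ 2) / (1 + c)) ^ β ≤ u ^ β := Real.rpow_le_rpow (by positivity) hq hβ0
    _ ≤ u := Real.rpow_le_self_of_one_le hu1 hβ1

theorem lt_one_of_mul_rpow_lt {c β k X u : ℝ} (hc : 0 < c) (hβ0 : 0 ≤ β) (hβ1 : β ≤ 1)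
    (hX : 0 < X) (h : X * (1 + c * u ^ 2) = k) (huc : u < c⁻¹)
    (hb : u * X ^ β < (k / (1 + c)) ^ β) : u < 1 := by
  by_contra! hu1
  have hk : (k / (1 + c)) ^ β = X ^ β * ((1 + c * u ^ 2) / (1 + c)) ^ β := by
    rw [← h, mul_div_assoc, Real.mul_rpow hX.le (by positivity)]
  have := mul_le_mul_of_nonneg_left (one_add_mul_sq_div_rpow_le hc hβ0 hβ1 hu1 huc.le)
    (Real.rpow_nonneg hX.le β)
  linarith

theorem mul_rpow_one_sub_mul_rpow_eq {p r : ℝ} (b : ℝ) (hp : p ≠ 0) (hr : 0 < r) :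
    b * r ^ (1 - p) * (r ^ p) ^ (1 - p⁻¹) = b := by
  rw [← Real.rpow_mul hr.le, mul_assoc, ← Real.rpow_add hr, mul_sub, mul_one,
    mul_inv_cancel₀ hp, sub_add_sub_cancel', sub_self, Real.rpow_zero, mul_one]

theorem one_lt_mul_rpow_of_lower_root {p k c b r : ℝ} (hp : 0 < p) (hk : 0 ≤ k) (hc0 : 0 < c)
    (hc1 : c < 1) (hb : 0 ≤ b) (hr : 0 < r)
    (h : r ^ (2 * p - 2) - k * r ^ (p - 2) + c * b ^ 2 = 0)
    (hlt : r < (k * c / (1 + c)) ^ p⁻¹) : 1 < b * r ^ (1 - p) := by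
  rw [Real.lt_rpow_inv_iff_of_pos hr.le (by positivity) hp] at hlt
  calc 1 < c⁻¹ := one_lt_inv₀ hc0 |>.mpr hc1
    _ < b * r ^ (1 - p) := inv_lt_of_lt_threshold hc0 (Real.rpow_pos_of_pos hr p)
      (by positivity) (rpow_mul_one_add_sq_eq_of_root hr h) hlt

theorem mul_rpow_lt_one_of_upper_root {p k c b r : ℝ} (hp : 1 ≤ p) (hk : 0 ≤ k) (hc0 : 0 < c)
    (h : r ^ (2 * p - 2) - k * r ^ (p - 2) + c * b ^ 2 = 0)
    (hgt : (k * c / (1 + c)) ^ p⁻¹ < r) (hb : b < (k / (1 + c)) ^ (1 - p⁻¹)) :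
    b * r ^ (1 - p) < 1 := by
  have hthr : 0 ≤ k * c / (1 + c) := by positivity
  have hr : 0 < r := (Real.rpow_nonneg hthr _).trans_lt hgt
  rw [Real.rpow_inv_lt_iff_of_pos hthr hr.le (by linarith)] at hgt
  have hX := Real.rpow_pos_of_pos hr p
  have hroot := rpow_mul_one_add_sq_eq_of_root hr h
  refine lt_one_of_mul_rpow_lt (β := 1 - p⁻¹) hc0 ?_ ?_ hX hroot
    (lt_inv_of_threshold_lt hc0 hX hroot hgt) ?_
  · exact sub_nonneg.mpr (inv_le_one_of_one_le₀ hp)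
  · exact sub_le_self _ (inv_nonneg.mpr (by linarith))
  · rwa [mul_rpow_one_sub_mul_rpow_eq b (by linarith) hr]

theorem alpha_modulus_precritical_general (n d : ℕ) (hd : 0 < d) (hdn : d < n)
    (T : ℝ) (hT : 0 < T) (t : ℂ)
    (htcr : ‖t‖ <
      ((n : ℝ) / d) * (T / (2 * (n : ℝ) - d)) ^ ((2 * (n : ℝ) - d) / (2 * n)))
    (rm rp : ℝ) (hrm0 : 0 < rm)
    (hrmEq : rm ^ (4 * (n : ℝ) / d - 2) - (T / n) * rm ^ (2 * (n : ℝ) / d - 2) +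
        (((n : ℝ) - d) / n) * ((d : ℝ) ^ 2 / (n : ℝ) ^ 2) * ‖t‖ ^ 2 = 0)
    (hrpEq : rp ^ (4 * (n : ℝ) / d - 2) - (T / n) * rp ^ (2 * (n : ℝ) / d - 2) +
        (((n : ℝ) - d) / n) * ((d : ℝ) ^ 2 / (n : ℝ) ^ 2) * ‖t‖ ^ 2 = 0)
    (hlt : rm < ((T / n) * (((n : ℝ) - d) / (2 * (n : ℝ) - d))) ^ ((d : ℝ) / (2 * n)))
    (hgt : ((T / n) * (((n : ℝ) - d) / (2 * (n : ℝ) - d))) ^ ((d : ℝ) / (2 * n)) < rp) :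
    ((d : ℝ) / n) * ‖t‖ * rp ^ (1 - 2 * (n : ℝ) / d) < 1 ∧
    1 < ((d : ℝ) / n) * ‖t‖ * rm ^ (1 - 2 * (n : ℝ) / d) := by
  have hD : (0 : ℝ) < d := by exact_mod_cast hd
  have hDN : (d : ℝ) < n := by exact_mod_cast hdn
  have hN : (0 : ℝ) < n := hD.trans hDN
  have hp : 1 ≤ 2 * (n : ℝ) / d := by rw [le_div_iff₀ hD]; linarith
  have hc0 : 0 < ((n : ℝ) - d) / n := div_pos (by linarith) hN
  have hc1 : ((n : ℝ) - d) / n < 1 := by rw [div_lt_one hN]; linarith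
  have hc : 1 + ((n : ℝ) - d) / n = (2 * n - d) / n := by field_simp; ring
  have hthr : (T / n) * (((n : ℝ) - d) / (2 * (n : ℝ) - d)) =
      T / n * (((n : ℝ) - d) / n) / (1 + ((n : ℝ) - d) / n) := by rw [hc]; field_simp
  have hexp : (d : ℝ) / (2 * n) = (2 * (n : ℝ) / d)⁻¹ := (inv_div _ _).symm
  have hroot : ∀ r : ℝ, r ^ (4 * (n : ℝ) / d - 2) - (T / n) * r ^ (2 * (n : ℝ) / d - 2) +
      (((n : ℝ) - d) / n) * ((d : ℝ) ^ 2 / (n : ℝ) ^ 2) * ‖t‖ ^ 2 =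
      r ^ (2 * (2 * (n : ℝ) / d) - 2) - (T / n) * r ^ (2 * (n : ℝ) / d - 2) +
      (((n : ℝ) - d) / n) * ((d : ℝ) / n * ‖t‖) ^ 2 := fun r => by
    rw [show 4 * (n : ℝ) / d - 2 = 2 * (2 * n / d) - 2 by ring]; ring
  have hcr : ((n : ℝ) / d) * (T / (2 * (n : ℝ) - d)) ^ ((2 * (n : ℝ) - d) / (2 * n)) =
      ((d : ℝ) / n)⁻¹ * (T / n / (1 + ((n : ℝ) - d) / n)) ^ (1 - (2 * (n : ℝ) / d)⁻¹) := by
    rw [hc, inv_div]; congr 2 <;> field_simp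
  rw [hcr, ← div_eq_inv_mul, lt_div_iff₀' (by positivity)] at htcr
  rw [hthr, hexp] at hlt hgt
  rw [hroot] at hrmEq hrpEq
  exact ⟨mul_rpow_lt_one_of_upper_root hp (by positivity) hc0 hrpEq hgt htcr,
    one_lt_mul_rpow_of_lower_root (by linarith) (by positivity) hc0 hc1 (by positivity) hrm0
      hrmEq hlt⟩

theorem alpha_modulus_precritical (n d : ℕ) (hd : 0 < d) (hdn : d < n)
    (T : ℝ) (hT : 0 < T) (t : ℂ) (ht0 : 0 < ‖t‖)
    (htcr : ‖t‖ <
      ((n : ℝ) / d) * (T / (2 * (n : ℝ) - d)) ^ ((2 * (n : ℝ) - d) / (2 * n)))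
    (rm rp : ℝ) (hrm0 : 0 < rm)
    (hrmEq : rm ^ (4 * (n : ℝ) / d - 2) - (T / n) * rm ^ (2 * (n : ℝ) / d - 2) +
        (((n : ℝ) - d) / n) * ((d : ℝ) ^ 2 / (n : ℝ) ^ 2) * ‖t‖ ^ 2 = 0)
    (hrpEq : rp ^ (4 * (n : ℝ) / d - 2) - (T / n) * rp ^ (2 * (n : ℝ) / d - 2) +
        (((n : ℝ) - d) / n) * ((d : ℝ) ^ 2 / (n : ℝ) ^ 2) * ‖t‖ ^ 2 = 0)
    (hlt : rm < ((T / n) * (((n : ℝ) - d) / (2 * (n : ℝ) - d))) ^ ((d : ℝ) / (2 * n)))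
    (hgt : ((T / n) * (((n : ℝ) - d) / (2 * (n : ℝ) - d))) ^ ((d : ℝ) / (2 * n)) < rp) :
    ((d : ℝ) / n) * ‖t‖ * rp ^ (1 - 2 * (n : ℝ) / d) < 1 ∧
    1 < ((d : ℝ) / n) * ‖t‖ * rm ^ (1 - 2 * (n : ℝ) / d) :=
  alpha_modulus_precritical_general n d hd hdn T hT t htcr rm rp hrm0 hrmEq hrpEq hlt hgt
end

section
/- Let n and d be positive integers with n < d < 2n, let T > 0, and let t ∈ ℂ. Then the equation r^{4n/d − 2} − (T/n)·r^{2n/d − 2} + ((n−d)/n)·(d²/n²)·|t|² = 0 (with real powers of r) has a unique solution r_0 in (0, ∞). Moreover, if 0 < |t| < t_cr, where t_cr = (n/d)·(T/(2n−d))^{(2n−d)/(2n)}, then (d/n)·|t|·r_0^{1 − 2n/d} < 1. -/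
/-!
With `a = 2n/d ∈ (1, 2)` and `β = (d/n)|t|` the equation reads
`r ^ (2a - 2) - (T/n) r ^ (a - 2) = c` with `c = ((2 - a)/a) β²`. The left side
is strictly increasing on `(0, ∞)`, because the first exponent is positive and the second negative,
and it runs from `-∞` to `+∞`; hence every `c` has exactly one preimage. The bound on the root
follows by evaluating the left side at `s = β ^ (1/(a-1))`: it stays below the
right side exactly when `β ^ (a/(a-1)) < T/(2n - d)`, i.e. when `|t| < t_cr`, so the root exceeds `s`,
i.e. `β < r₀ ^ (a - 1)`.
-/

open Real Set Filter Topology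

section RootOfPowerDifference

variable {p q K : ℝ}

theorem strictMonoOn_rpow_sub_mul_rpow (hp : 0 < p) (hq : q < 0) (hK : 0 ≤ K) :
    StrictMonoOn (fun r : ℝ => r ^ p - K * r ^ q) (Ioi 0) := by
  intro x hx y _ hxy
  have hpow := rpow_lt_rpow (le_of_lt hx) hxy hp
  have hneg := mul_le_mul_of_nonneg_left (rpow_le_rpow_of_nonpos hx hxy.le hq.le) hK
  dsimp only
  linarith

theorem tendsto_rpow_sub_mul_rpow_atTop (hp : 0 < p) (hq : q < 0) :
    Tendsto (fun r : ℝ => r ^ p - K * r ^ q) atTop atTop := by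
  have hdecay : Tendsto (fun r : ℝ => K * r ^ q) atTop (𝓝 0) := by
    simpa using (tendsto_rpow_neg_atTop (neg_pos.2 hq)).const_mul K
  simpa only [sub_eq_add_neg] using (tendsto_rpow_atTop hp).atTop_add hdecay.neg

theorem tendsto_rpow_sub_mul_rpow_nhdsGT_zero (hp : 0 < p) (hq : q < 0) (hK : 0 < K) :
    Tendsto (fun r : ℝ => r ^ p - K * r ^ q) (𝓝[>] 0) atBot := by
  have hvanish : Tendsto (fun r : ℝ => r ^ p) (𝓝[>] 0) (𝓝 0) := by
    simpa [zero_rpow hp.ne'] using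
      ((continuousAt_rpow_const 0 p (Or.inr hp.le)).tendsto).mono_left nhdsWithin_le_nhds
  simpa only [sub_eq_add_neg, Function.comp_apply] using hvanish.add_atBot
    (tendsto_neg_atTop_atBot.comp ((tendsto_rpow_neg_nhdsGT_zero hq).const_mul_atTop hK))

theorem continuousOn_rpow_sub_mul_rpow :
    ContinuousOn (fun r : ℝ => r ^ p - K * r ^ q) (Ioi 0) := fun r hr =>
  ((continuousAt_rpow_const r p (Or.inl (ne_of_gt hr))).sub
    (continuousAt_const.mul (continuousAt_rpow_const r q (Or.inl (ne_of_gt hr))))).continuousWithinAt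

theorem existsUnique_rpow_sub_mul_rpow_eq (hp : 0 < p) (hq : q < 0) (hK : 0 < K) (c : ℝ) :
    ∃! r : ℝ, 0 < r ∧ r ^ p - K * r ^ q = c := by
  obtain ⟨r, hr, hrc⟩ := isPreconnected_Ioi.intermediate_value_Iii (l₁ := 𝓝[>] 0) inf_le_right
    (le_principal_iff.2 (Ioi_mem_atTop 0)) continuousOn_rpow_sub_mul_rpow
    (tendsto_rpow_sub_mul_rpow_nhdsGT_zero hp hq hK) (tendsto_rpow_sub_mul_rpow_atTop hp hq)
    (mem_univ c)
  refine ⟨r, ⟨hr, hrc⟩, fun s ⟨hs, hsc⟩ => ?_⟩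
  exact (strictMonoOn_rpow_sub_mul_rpow hp hq hK.le).injOn hs hr (hsc.trans hrc.symm)

end RootOfPowerDifference

theorem lt_rpow_of_rpow_sub_mul_rpow_eq {a K β r : ℝ} (ha1 : 1 < a) (ha2 : a < 2) (hK : 0 < K)
    (hβ : 0 < β) (hβK : β < (a * K / (2 * (a - 1))) ^ ((a - 1) / a)) (hr : 0 < r)
    (hroot : r ^ (2 * a - 2) - K * r ^ (a - 2) = (2 - a) / a * β ^ 2) :
    β < r ^ (a - 1) := by
  have ha0 : 0 < a := by linarith
  have ha1' : 0 < a - 1 := by linarith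
  set s := β ^ (a - 1)⁻¹
  have hs : 0 < s := rpow_pos_of_pos hβ _
  have hsβ : s ^ (a - 1) = β := rpow_inv_rpow hβ.le ha1'.ne'
  have hsa : s ^ a * (2 * (a - 1)) / a < K := by
    have : β ^ (a / (a - 1)) < a * K / (2 * (a - 1)) := by
      rwa [← lt_rpow_inv_iff_of_pos hβ.le (by positivity) (by positivity), inv_div]
    rw [div_lt_iff₀ ha0, ← lt_div_iff₀ (by positivity), mul_comm K]
    rwa [← rpow_mul hβ.le, inv_mul_eq_div]
  have hgs : s ^ (2 * a - 2) - K * s ^ (a - 2) < (2 - a) / a * β ^ 2 := by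
    have hsplit : s ^ (2 * a - 2) = s ^ a * s ^ (a - 2) := by
      rw [← rpow_add hs]; ring_nf
    have hβsq : β ^ 2 = s ^ a * s ^ (a - 2) := by
      rw [← hsβ, ← rpow_natCast, ← rpow_mul hs.le, ← rpow_add hs]; ring_nf
    have hcoeff : (2 - a) / a * (s ^ a * s ^ (a - 2))
        = s ^ a * s ^ (a - 2) - s ^ a * (2 * (a - 1)) / a * s ^ (a - 2) := by
      field_simp; ring
    rw [hβsq, hsplit, hcoeff]
    gcongr
  have hsr : s < r := ((strictMonoOn_rpow_sub_mul_rpow (by linarith) (by linarith) hK.le).lt_iff_lt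
    hs hr).1 (hroot ▸ hgs)
  calc β = s ^ (a - 1) := hsβ.symm
    _ < r ^ (a - 1) := rpow_lt_rpow hs.le hsr ha1'

theorem unique_solution_precritical (n d : ℕ) (hnd : n < d) (hdn : d < 2 * n)
    (T : ℝ) (hT : 0 < T) (t : ℂ) :
    ∃ r0 : ℝ, 0 < r0 ∧
      (r0 ^ (4 * (n : ℝ) / d - 2) - (T / n) * r0 ^ (2 * (n : ℝ) / d - 2) +
          (((n : ℝ) - d) / n) * ((d : ℝ) ^ 2 / (n : ℝ) ^ 2) * ‖t‖ ^ 2 = 0) ∧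
      (∀ r : ℝ, 0 < r →
        r ^ (4 * (n : ℝ) / d - 2) - (T / n) * r ^ (2 * (n : ℝ) / d - 2) +
            (((n : ℝ) - d) / n) * ((d : ℝ) ^ 2 / (n : ℝ) ^ 2) * ‖t‖ ^ 2 = 0 →
          r = r0) ∧
      (0 < ‖t‖ →
        ‖t‖ <
          ((n : ℝ) / d) * (T / (2 * (n : ℝ) - d)) ^ ((2 * (n : ℝ) - d) / (2 * n)) →
        ((d : ℝ) / n) * ‖t‖ * r0 ^ (1 - 2 * (n : ℝ) / d) < 1) := by
  have hn : (0 : ℝ) < n := Nat.cast_pos.2 (by omega)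
  have hnd' : (n : ℝ) < d := by exact_mod_cast hnd
  have hdn' : (d : ℝ) < 2 * n := by exact_mod_cast hdn
  have hd : (0 : ℝ) < d := hn.trans hnd'
  rw [show 4 * (n : ℝ) / d - 2 = 2 * (2 * n / d) - 2 by ring]
  set a := 2 * (n : ℝ) / d with ha
  have ha1 : 1 < a := by rw [ha, lt_div_iff₀ hd]; linarith
  have ha2 : a < 2 := by rw [ha, div_lt_iff₀ hd]; linarith
  set C := ((n : ℝ) - d) / n * ((d : ℝ) ^ 2 / (n : ℝ) ^ 2) * ‖t‖ ^ 2 with hCdef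
  obtain ⟨r0, ⟨hr0, hroot⟩, huniq⟩ := existsUnique_rpow_sub_mul_rpow_eq (by linarith : 0 < 2 * a - 2)
    (by linarith : a - 2 < 0) (by positivity : 0 < T / n) (-C)
  refine ⟨r0, hr0, add_eq_zero_iff_eq_neg.2 hroot,
    fun r hr hr' => huniq r ⟨hr, add_eq_zero_iff_eq_neg.1 hr'⟩, fun ht hcrit => ?_⟩
  have hC : -C = (2 - a) / a * (d / n * ‖t‖) ^ 2 := by
    rw [hCdef, ha]; field_simp; ring
  have hcrit' : d / n * ‖t‖ < (a * (T / n) / (2 * (a - 1))) ^ ((a - 1) / a) := calc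
    d / n * ‖t‖ < d / n * (n / d * (T / (2 * n - d)) ^ ((2 * (n : ℝ) - d) / (2 * n))) := by gcongr
    _ = _ := by rw [ha]; field_simp
  have hlt := lt_rpow_of_rpow_sub_mul_rpow_eq ha1 ha2 (by positivity) (by positivity) hcrit' hr0
    (hroot.trans hC)
  rwa [show 1 - a = -(a - 1) by ring, rpow_neg hr0.le, ← div_eq_mul_inv,
    div_lt_one (rpow_pos_of_pos hr0 _)]
end

section
/- Let n and d be positive integers with 0 < d < 2n, let T > 0, and let t ∈ ℂ with t ≠ 0. Define the real number r = (T/(2n−d))^{1/2}·((d/n)·|t|)^{(d−n)/(2n−d)} and the complex number α = −(t̄/|t|)·(T/(2n−d))^{1/2}·((d/n)·|t|)^{−n/(2n−d)}. Then r and α satisfy the total mass condition (n/T)·r^{2n/d}·((2n−d)/n)·|α|^{2 − 2n/d} = 1 and the deformation condition −(n/d)·r^{2n/d − 1}·|α|^{−2n/d}·conj(α) = t. -/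
/-! Write `a = T/(2n-d)` and `b = (d/n)|t|`. Then `r = a^{1/2} b^{(d-n)/(2n-d)}` and
`|α| = a^{1/2} b^{-n/(2n-d)}` are monomials in `a` and `b`, and the two conditions reduce to
the exponent balances `r^{2n/d} |α|^{2-2n/d} = a` and `r^{2n/d-1} |α|^{1-2n/d} = b`;
the phase `-t̄/|t|` of `α` is chosen so that `conj α` points along `t`. -/

open Real ComplexConjugate

lemma rpow_monomial_mul_rpow_monomial {a b : ℝ} (ha : 0 < a) (hb : 0 < b)
    (x y p x' y' q : ℝ) :
    (a ^ x * b ^ y) ^ p * (a ^ x' * b ^ y') ^ q =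
      a ^ (x * p + x' * q) * b ^ (y * p + y' * q) := by
  rw [mul_rpow (rpow_pos_of_pos ha _).le (rpow_pos_of_pos hb _).le,
    mul_rpow (rpow_pos_of_pos ha _).le (rpow_pos_of_pos hb _).le,
    ← rpow_mul ha.le, ← rpow_mul hb.le, ← rpow_mul ha.le, ← rpow_mul hb.le,
    mul_mul_mul_comm, ← rpow_add ha, ← rpow_add hb]

lemma rpow_mass_balance {n d a b : ℝ} (hd : d ≠ 0) (ha : 0 < a) (hb : 0 < b) :
    (a ^ (1 / 2 : ℝ) * b ^ ((d - n) / (2 * n - d))) ^ (2 * n / d) *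
      (a ^ (1 / 2 : ℝ) * b ^ (-n / (2 * n - d))) ^ (2 - 2 * n / d) = a := by
  rw [rpow_monomial_mul_rpow_monomial ha hb,
    show (1 / 2 : ℝ) * (2 * n / d) + 1 / 2 * (2 - 2 * n / d) = 1 by ring,
    show (d - n) / (2 * n - d) * (2 * n / d) + -n / (2 * n - d) * (2 - 2 * n / d) = 0 by
      field_simp; ring,
    rpow_one, rpow_zero, mul_one]

lemma rpow_deformation_balance {n d a b : ℝ} (hd : d ≠ 0) (hm : 2 * n - d ≠ 0)
    (ha : 0 < a) (hb : 0 < b) :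
    (a ^ (1 / 2 : ℝ) * b ^ ((d - n) / (2 * n - d))) ^ (2 * n / d - 1) *
      (a ^ (1 / 2 : ℝ) * b ^ (-n / (2 * n - d))) ^ (-(2 * n / d) + 1) = b := by
  have hexp : (d - n) / (2 * n - d) * (2 * n / d - 1) + -n / (2 * n - d) * (-(2 * n / d) + 1)
      = 1 := by
    rw [div_mul_eq_mul_div, div_mul_eq_mul_div, ← add_div, div_eq_one_iff_eq hm]
    field_simp
    ring
  rw [rpow_monomial_mul_rpow_monomial ha hb,
    show (1 / 2 : ℝ) * (2 * n / d - 1) + 1 / 2 * (-(2 * n / d) + 1) = 0 by ring,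
    hexp, rpow_one, rpow_zero, one_mul]

section Phase

variable {t : ℂ} {c : ℝ}

lemma norm_neg_conj_div_norm_mul_ofReal (ht : t ≠ 0) (hc : 0 ≤ c) :
    ‖-(conj t / (‖t‖ : ℂ)) * (c : ℂ)‖ = c := by
  simp [abs_of_nonneg hc, norm_ne_zero_iff.mpr ht]

lemma ofReal_neg_mul_conj_neg_conj_div_norm_mul_ofReal (ht : t ≠ 0) {s : ℝ} (hs : s * c = ‖t‖) :
    ((-s : ℝ) : ℂ) * conj (-(conj t / (‖t‖ : ℂ)) * (c : ℂ)) = t := by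
  have : (‖t‖ : ℂ) ≠ 0 := by exact_mod_cast norm_ne_zero_iff.mpr ht
  simp only [map_mul, map_neg, map_div₀, Complex.conj_conj, Complex.conj_ofReal]
  calc _ = ((s * c : ℝ) : ℂ) / ‖t‖ * t := by push_cast; ring
    _ = t := by rw [hs, div_self this, one_mul]

end Phase

theorem postcritical_parameters_satisfy_conditions (n d : ℕ) (hd : 0 < d) (hdn : d < 2 * n)
    (T : ℝ) (hT : 0 < T) (t : ℂ) (ht : t ≠ 0)
    (r : ℝ) (α : ℂ)
    (hr : r = (T / (2 * (n : ℝ) - d)) ^ ((1 : ℝ) / 2) *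
        (((d : ℝ) / n) * ‖t‖) ^ (((d : ℝ) - n) / (2 * (n : ℝ) - d)))
    (hα : α = -((starRingEnd ℂ) t / (‖t‖ : ℂ)) *
        (((T / (2 * (n : ℝ) - d)) ^ ((1 : ℝ) / 2) *
          (((d : ℝ) / n) * ‖t‖) ^ (-(n : ℝ) / (2 * (n : ℝ) - d)) : ℝ) : ℂ)) :
    ((n : ℝ) / T) * r ^ (2 * (n : ℝ) / d) * ((2 * (n : ℝ) - d) / n) *
        ‖α‖ ^ (2 - 2 * (n : ℝ) / d) = 1 ∧
    ((-((n : ℝ) / d) * r ^ (2 * (n : ℝ) / d - 1) *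
        ‖α‖ ^ (-(2 * (n : ℝ) / d)) : ℝ) : ℂ) * (starRingEnd ℂ) α = t := by
  have hdR : (0 : ℝ) < d := by exact_mod_cast hd
  have hnR : (0 : ℝ) < n := by exact_mod_cast (show 0 < n by omega)
  have hm : (0 : ℝ) < 2 * n - d := by
    have : (d : ℝ) < 2 * n := by exact_mod_cast hdn
    linarith
  have ha : 0 < T / (2 * (n : ℝ) - d) := div_pos hT hm
  have hb : 0 < (d : ℝ) / n * ‖t‖ := mul_pos (div_pos hdR hnR) (norm_pos_iff.mpr ht)
  set c := (T / (2 * (n : ℝ) - d)) ^ ((1 : ℝ) / 2) *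
    ((d : ℝ) / n * ‖t‖) ^ (-(n : ℝ) / (2 * n - d))
  have hc_pos : 0 < c := mul_pos (rpow_pos_of_pos ha _) (rpow_pos_of_pos hb _)
  have hαnorm : ‖α‖ = c := hα ▸ norm_neg_conj_div_norm_mul_ofReal ht hc_pos.le
  constructor
  · calc _ = (n / T) * ((2 * (n : ℝ) - d) / n) *
            (r ^ (2 * (n : ℝ) / d) * ‖α‖ ^ (2 - 2 * (n : ℝ) / d)) := by ring
      _ = 1 := by
        rw [hr, hαnorm, rpow_mass_balance hdR.ne' ha hb]
        grind
  · have hs : (n / d) * r ^ (2 * (n : ℝ) / d - 1) * ‖α‖ ^ (-(2 * (n : ℝ) / d)) * c = ‖t‖ := by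
      rw [hαnorm, mul_assoc _ (c ^ _), ← rpow_add_one hc_pos.ne', mul_assoc, hr,
        rpow_deformation_balance hdR.ne' hm.ne' ha hb]
      field_simp
    have h := ofReal_neg_mul_conj_neg_conj_div_norm_mul_ofReal ht hs
    rwa [← hα, ← neg_mul, ← neg_mul] at h
end

section
/- Let n and d be positive integers with 0 < d < 2n, and let α, u ∈ ℂ satisfy |α| < 1 < |u|. Then |u|^{2n/d}·(1 − conj(α)/conj(u)) ≠ 1 − conj(α)·u. -/
/-! Put `ρ = ‖u‖` and `r = ρ ^ (2n/d)`, so that `r ≥ ρ > 1`. Multiplying the supposed equality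
by `conj u` and using `u * conj u = ρ²` gives `(r - 1) conj u = conj α (r - ρ²)`, hence
`(r - 1) ρ = ‖α‖ |r - ρ²|`. Since `|r - ρ²| ≤ ρ (r - 1)` for `1 ≤ ρ ≤ r`, this forces `‖α‖ ≥ 1`. -/

open ComplexConjugate

lemma abs_sub_sq_le_mul_sub_one {ρ r : ℝ} (hρ : 1 ≤ ρ) (hρr : ρ ≤ r) :
    |r - ρ ^ 2| ≤ ρ * (r - 1) := by
  rw [abs_le]
  constructor <;> nlinarith

lemma sub_one_mul_conj_eq_of_mul_one_sub_div_conj_eq {r : ℝ} {α u : ℂ} (hu : u ≠ 0)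
    (h : (r : ℂ) * (1 - conj α / conj u) = 1 - conj α * u) :
    ((r : ℂ) - 1) * conj u = conj α * ((r : ℂ) - ((‖u‖ ^ 2 : ℝ) : ℂ)) := by
  have hnorm : u * conj u = ((‖u‖ ^ 2 : ℝ) : ℂ) := by
    rw [Complex.mul_conj, ← Complex.sq_norm]
  have hcu : conj u ≠ 0 := (map_ne_zero _).mpr hu
  field_simp at h
  linear_combination h - conj α * hnorm

theorem ofReal_mul_one_sub_div_conj_ne {r : ℝ} {α u : ℂ} (hα : ‖α‖ < 1) (hu : 1 < ‖u‖)
    (hur : ‖u‖ ≤ r) :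
    (r : ℂ) * (1 - conj α / conj u) ≠ 1 - conj α * u := by
  intro h
  have hu0 : u ≠ 0 := norm_pos_iff.mp (one_pos.trans hu)
  have hr : 0 < r - 1 := by linarith
  have key : (r - 1) * ‖u‖ = ‖α‖ * |r - ‖u‖ ^ 2| := by
    have := congrArg norm (sub_one_mul_conj_eq_of_mul_one_sub_div_conj_eq hu0 h)
    rwa [← Complex.ofReal_one, ← Complex.ofReal_sub, ← Complex.ofReal_sub, norm_mul, norm_mul,
      Complex.norm_conj, Complex.norm_conj, Complex.norm_real, Complex.norm_real,
      Real.norm_eq_abs, Real.norm_eq_abs, abs_of_pos hr] at this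
  have hbound := abs_sub_sq_le_mul_sub_one hu.le hur
  have hpos : 0 < ‖u‖ * (r - 1) := mul_pos (one_pos.trans hu) hr
  nlinarith [mul_le_mul_of_nonneg_left hbound (norm_nonneg α)]

theorem no_critical_point_precritical (n d : ℕ) (hd : 0 < d) (hdn : d < 2 * n)
    (α u : ℂ) (hα : ‖α‖ < 1) (hu : 1 < ‖u‖) :
    ((‖u‖ ^ (2 * (n : ℝ) / d) : ℝ) : ℂ) *
        (1 - (starRingEnd ℂ) α / (starRingEnd ℂ) u) ≠ 1 - (starRingEnd ℂ) α * u := by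
  have hexp : 1 ≤ 2 * (n : ℝ) / d := by
    rw [one_le_div (by exact_mod_cast hd)]
    exact_mod_cast hdn.le
  exact ofReal_mul_one_sub_div_conj_ne hα hu (Real.self_le_rpow_of_one_le hu.le hexp)
end

section
/- Let n and d be positive integers and let α ∈ ℂ with |α| < 1. Then (1/(2πi)) · ∮_{|u|=1} (1 − α/u)·(1 − conj(α)·u)·[ (1 − d/n)·(1/u) + (d/n)·(1/(u − α)) ] du = (n + (n − d)·|α|²)/n, where the integral is the counterclockwise contour integral over the unit circle. -/
/-!
On the unit circle the factor `1 - α / u` cancels the pole at `α`, so the integrand is the Laurent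
polynomial `K u⁻¹ - (1 - d/n) α u⁻² - conj α` with `K = 1 + (1 - d/n) |α|²`, and the contour
integral picks up `2πi K`.
-/

open Complex Metric

theorem precritical_integrand_eq_laurent {a b c u : ℂ} (hu : u ≠ 0) (hua : u ≠ a) :
    (1 - a / u) * (1 - b * u) * ((1 - c) * u⁻¹ + c * (u - a)⁻¹) =
      (1 + (1 - c) * (a * b)) * u⁻¹ + (-(1 - c) * a) * u ^ (-2 : ℤ) + -b := by
  have hua' : u - a ≠ 0 := sub_ne_zero.mpr hua
  rw [zpow_neg, zpow_ofNat]
  field_simp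
  ring

theorem circleIntegral_laurent_eq_two_pi_I_mul_residue (A B C : ℂ) {R : ℝ} (hR : 0 < R) :
    (∮ z in C(0, R), (A * z⁻¹ + B * z ^ (-2 : ℤ) + C)) = 2 * Real.pi * I * A := by
  have hR0 : (0 : ℂ) ∉ sphere 0 |R| := by simpa using (abs_pos.mpr hR.ne').ne
  have hinv : CircleIntegrable (fun z : ℂ => z⁻¹) 0 R := by
    simpa using circleIntegrable_sub_inv_iff.mpr (Or.inr hR0)
  have hzpow : CircleIntegrable (fun z : ℂ => z ^ (-2 : ℤ)) 0 R := by
    simpa only [sub_zero] using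
      circleIntegrable_sub_zpow_iff (n := -2).mpr (Or.inr (Or.inr hR0))
  have hinv_int : (∮ z in C(0, R), z⁻¹) = 2 * Real.pi * I := by
    simpa using circleIntegral.integral_sub_inv_of_mem_ball (c := 0) (mem_ball_self hR)
  have hzpow_int : (∮ z in C(0, R), z ^ (-2 : ℤ)) = 0 := by
    simpa using circleIntegral.integral_sub_zpow_of_ne (by decide : (-2 : ℤ) ≠ -1) 0 0 R
  have hone_int : (∮ _ in C(0, R), (1 : ℂ)) = 0 := by
    simpa using circleIntegral.integral_sub_zpow_of_ne (by decide : (0 : ℤ) ≠ -1) 0 0 R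
  have hconst_int : (∮ _ in C(0, R), C) = 0 := by
    simpa [hone_int] using circleIntegral.integral_const_mul C (fun _ => (1 : ℂ)) 0 R
  rw [circleIntegral.integral_add (by fun_prop) (circleIntegrable_const C 0 R),
    circleIntegral.integral_add (by fun_prop) (by fun_prop), circleIntegral.integral_const_mul,
    circleIntegral.integral_const_mul, hinv_int, hzpow_int, hconst_int]
  ring

theorem total_mass_contour_integral_precritical_general (n d : ℕ) (hn : 0 < n)
    (α : ℂ) (hα : ‖α‖ < 1) :
    (2 * Real.pi * Complex.I)⁻¹ *
        (∮ u in C(0, 1),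
          (1 - α / u) * (1 - (starRingEnd ℂ) α * u) *
            ((1 - (d : ℂ) / n) * u⁻¹ + ((d : ℂ) / n) * (u - α)⁻¹)) =
      ((((n : ℝ) + ((n : ℝ) - d) * ‖α‖ ^ 2) / n : ℝ) : ℂ) := by
  have hα_sphere : α ∉ sphere (0 : ℂ) 1 := by simpa using hα.ne
  rw [circleIntegral.integral_congr zero_le_one fun u hu =>
      precritical_integrand_eq_laurent (ne_zero_of_mem_unit_sphere ⟨u, hu⟩)
        (ne_of_mem_of_not_mem hu hα_sphere),
    circleIntegral_laurent_eq_two_pi_I_mul_residue _ _ _ zero_lt_one, ← mul_assoc,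
    inv_mul_cancel₀ two_pi_I_ne_zero, one_mul, mul_conj, normSq_eq_norm_sq]
  have hn0 : (n : ℂ) ≠ 0 := Nat.cast_ne_zero.mpr hn.ne'
  push_cast
  field_simp

theorem total_mass_contour_integral_precritical (n d : ℕ) (hn : 0 < n) (hd : 0 < d)
    (α : ℂ) (hα : ‖α‖ < 1) :
    (2 * Real.pi * Complex.I)⁻¹ *
        (∮ u in C(0, 1),
          (1 - α / u) * (1 - (starRingEnd ℂ) α * u) *
            ((1 - (d : ℂ) / n) * u⁻¹ + ((d : ℂ) / n) * (u - α)⁻¹)) =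
      ((((n : ℝ) + ((n : ℝ) - d) * ‖α‖ ^ 2) / n : ℝ) : ℂ) :=
  total_mass_contour_integral_precritical_general n d hn α hα
end

section
/- Let d be a positive integer, let r > 0, let Ω = {u ∈ ℂ : |u| > 1}, and let g : Ω → ℂ be holomorphic with g(u) ≠ 0 for all u ∈ Ω and g(u) → 1 as |u| → ∞. Suppose the map f(u) = r·u·g(u) is injective on Ω. Then there exists a holomorphic function h : Ω → ℂ with h(u)^d = g(u^d) for all u ∈ Ω and h(u) → 1 as |u| → ∞, and for any such h the map u ↦ r^{1/d}·u·h(u) is injective on Ω. -/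
open Complex Filter Set Metric Bornology Function Topology

/-!
Via `w = 1/u`, `g` becomes a nonvanishing holomorphic function on the unit disc (the
singularity at `0` is removable because `g → 1`), so it has a holomorphic logarithm vanishing
at `0`. This gives a logarithm `L` of `g` near `∞` with `L → 0`, and `exp (L (u ^ d) / d)` is
the required root `h`.

For injectivity, equal values at `u` and `v` force `u ^ d = v ^ d` by injectivity of `f`, so
`v = ζ u` with `ζ ^ d = 1`. Along the ray `t ↦ t u`, `t ≥ 1`, the quotient
`ζ h (ζ t u) / h (t u)` is a continuous `d`-th root of unity; it equals `1` at `t = 1` and tends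
to `ζ` as `t → ∞`, hence `ζ = 1`.
-/

theorem exists_differentiableOn_exp_eq_of_ball {f : ℂ → ℂ} {c a : ℂ} {R : ℝ}
    (hf : DifferentiableOn ℂ f (ball c R)) (hf0 : ∀ z ∈ ball c R, f z ≠ 0)
    (ha : exp a = f c) :
    ∃ L : ℂ → ℂ, DifferentiableOn ℂ L (ball c R) ∧ L c = a ∧
      ∀ z ∈ ball c R, exp (L z) = f z := by
  have hlog : DifferentiableOn ℂ (logDeriv f) (ball c R) :=
    (hf.deriv isOpen_ball).div hf hf0
  obtain ⟨L, hLc, hL⟩ := hlog.isExactOn_ball.with_val_at c a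
  have hLd : DifferentiableOn ℂ L (ball c R) := fun z hz =>
    (hL z hz).differentiableAt.differentiableWithinAt
  refine ⟨L, hLd, hLc, ?_⟩
  rcases le_or_gt R 0 with hR | hR
  · simp [ball_eq_empty.2 hR]
  have hexpL : EqOn (logDeriv (exp ∘ L)) (logDeriv f) (ball c R) := fun z hz => by
    rw [logDeriv_comp differentiableAt_exp (hL z hz).differentiableAt, (hL z hz).deriv]
    simp [logDeriv_apply]
  obtain ⟨k, -, hk⟩ := (logDeriv_eqOn_iff (differentiable_exp.comp_differentiableOn hLd) hf
    isOpen_ball (convex_ball c R).isPreconnected hf0 (fun z _ => exp_ne_zero _)).1 hexpL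
  have hk1 : k = 1 := by
    have := hk (mem_ball_self hR)
    simp only [comp_apply, hLc, Pi.smul_apply, smul_eq_mul, ← ha] at this
    exact (mul_eq_right₀ (exp_ne_zero a)).1 this.symm
  intro z hz
  simpa [hk1] using hk hz

theorem inv_mem_ball_of_one_lt_norm {u : ℂ} (hu : u ∈ {u : ℂ | 1 < ‖u‖}) :
    u⁻¹ ∈ ball (0 : ℂ) 1 := by
  simpa using inv_lt_one_of_one_lt₀ hu

theorem one_lt_norm_inv_of_mem_ball {w : ℂ} (hw : w ∈ ball (0 : ℂ) 1 \ {0}) :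
    w⁻¹ ∈ {u : ℂ | 1 < ‖u‖} := by
  simpa using one_lt_inv_iff₀.2 ⟨norm_pos_iff.2 hw.2, mem_ball_zero_iff.1 hw.1⟩

theorem pow_mem_of_one_lt_norm {u : ℂ} {d : ℕ} (hd : d ≠ 0) (hu : u ∈ {u : ℂ | 1 < ‖u‖}) :
    u ^ d ∈ {u : ℂ | 1 < ‖u‖} := by
  simpa using one_lt_pow₀ hu hd

theorem differentiableOn_update_inv_ball {g : ℂ → ℂ} {a : ℂ}
    (hg : DifferentiableOn ℂ g {u : ℂ | 1 < ‖u‖}) (hga : Tendsto g (cobounded ℂ) (𝓝 a)) :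
    DifferentiableOn ℂ (update (fun w => g w⁻¹) 0 a) (ball 0 1) := by
  refine (differentiableOn_compl_singleton_and_continuousAt_iff (ball_mem_nhds 0 one_pos)).1
    ⟨?_, continuousAt_update_same.2 (hga.comp tendsto_inv₀_nhdsNE_zero)⟩
  refine DifferentiableOn.congr (fun w hw => ?_) (fun w hw => update_of_ne hw.2 _ _)
  have hopen : IsOpen {u : ℂ | 1 < ‖u‖} := isOpen_lt continuous_const continuous_norm
  exact (hg.differentiableAt (hopen.mem_nhds (one_lt_norm_inv_of_mem_ball hw))).comp w
    (differentiableAt_inv hw.2) |>.differentiableWithinAt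

theorem exists_log_of_tendsto_cobounded {g : ℂ → ℂ}
    (hg : DifferentiableOn ℂ g {u : ℂ | 1 < ‖u‖}) (hg0 : ∀ u ∈ {u : ℂ | 1 < ‖u‖}, g u ≠ 0)
    (hg1 : Tendsto g (cobounded ℂ) (𝓝 1)) :
    ∃ L : ℂ → ℂ, DifferentiableOn ℂ L {u : ℂ | 1 < ‖u‖} ∧
      (∀ u ∈ {u : ℂ | 1 < ‖u‖}, exp (L u) = g u) ∧ Tendsto L (cobounded ℂ) (𝓝 0) := by
  set G := update (fun w => g w⁻¹) 0 1
  have hG0 : ∀ w ∈ ball (0 : ℂ) 1, G w ≠ 0 := by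
    intro w hw
    rcases eq_or_ne w 0 with rfl | hw0
    · simp [G]
    · simpa [G, update_of_ne hw0] using hg0 _ (one_lt_norm_inv_of_mem_ball ⟨hw, hw0⟩)
  obtain ⟨L, hLd, hL0, hL⟩ := exists_differentiableOn_exp_eq_of_ball
    (differentiableOn_update_inv_ball hg hg1) hG0 (a := 0) (by simp)
  refine ⟨fun u => L u⁻¹, hLd.comp (differentiableOn_inv.mono fun u hu => ?_)
    fun u hu => inv_mem_ball_of_one_lt_norm hu, fun u hu => ?_, ?_⟩
  · exact norm_pos_iff.1 (one_pos.trans hu)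
  · have hu0 : u⁻¹ ≠ 0 := inv_ne_zero (norm_pos_iff.1 (one_pos.trans hu))
    simp [hL _ (inv_mem_ball_of_one_lt_norm hu), update_of_ne hu0]
  · have hLc : ContinuousAt L 0 :=
      (hLd.differentiableAt (ball_mem_nhds 0 one_pos)).continuousAt
    exact hL0 ▸ hLc.tendsto.comp tendsto_inv₀_cobounded

theorem exists_pow_eq_comp_pow {g : ℂ → ℂ} {d : ℕ} (hd : d ≠ 0)
    (hg : DifferentiableOn ℂ g {u : ℂ | 1 < ‖u‖}) (hg0 : ∀ u ∈ {u : ℂ | 1 < ‖u‖}, g u ≠ 0)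
    (hg1 : Tendsto g (cobounded ℂ) (𝓝 1)) :
    ∃ h : ℂ → ℂ, DifferentiableOn ℂ h {u : ℂ | 1 < ‖u‖} ∧
      (∀ u ∈ {u : ℂ | 1 < ‖u‖}, h u ^ d = g (u ^ d)) ∧ Tendsto h (cobounded ℂ) (𝓝 1) := by
  obtain ⟨L, hLd, hL, hL0⟩ := exists_log_of_tendsto_cobounded hg hg0 hg1
  refine ⟨fun u => exp (L (u ^ d) / d), ?_, fun u hu => ?_, ?_⟩
  · exact ((hLd.comp (differentiableOn_pow d) fun u hu =>
      pow_mem_of_one_lt_norm hd hu).div_const _).cexp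
  · rw [← exp_nat_mul, mul_div_cancel₀ _ (Nat.cast_ne_zero.2 hd),
      hL _ (pow_mem_of_one_lt_norm hd hu)]
  · simpa using ((hL0.div_const (d : ℂ)).comp (tendsto_pow_cobounded_cobounded hd)).cexp

theorem tendsto_ofReal_mul_atTop_cobounded {u : ℂ} (hu : u ≠ 0) :
    Tendsto (fun t : ℝ => (t : ℂ) * u) atTop (cobounded ℂ) := by
  rw [← tendsto_norm_atTop_iff_cobounded]
  simpa using (tendsto_abs_atTop_atTop).atTop_mul_const (norm_pos_iff.2 hu)

theorem eq_one_of_mul_eq_of_pow_eq_one {h : ℂ → ℂ} {d : ℕ} {ζ u : ℂ} (hd : d ≠ 0)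
    (hζ : ζ ^ d = 1) (hu : u ∈ {u : ℂ | 1 < ‖u‖}) (hh : ContinuousOn h {u : ℂ | 1 < ‖u‖})
    (hh0 : ∀ z ∈ {u : ℂ | 1 < ‖u‖}, h z ≠ 0)
    (hpow : ∀ z ∈ {u : ℂ | 1 < ‖u‖}, h (ζ * z) ^ d = h z ^ d)
    (hh1 : Tendsto h (cobounded ℂ) (𝓝 1)) (heq : ζ * h (ζ * u) = h u) : ζ = 1 := by
  have hζ1 : ‖ζ‖ = 1 := norm_eq_one_of_pow_eq_one hζ hd
  have hu0 : u ≠ 0 := norm_pos_iff.1 (one_pos.trans hu)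
  have hray : ∀ t ∈ Ici (1 : ℝ), (t : ℂ) * u ∈ {u : ℂ | 1 < ‖u‖} := fun t (ht : 1 ≤ t) => by
    have : 1 < t * ‖u‖ := one_lt_mul_of_le_of_lt ht hu
    simpa [abs_of_nonneg (zero_le_one.trans ht)] using this
  have hrot : ∀ z ∈ {u : ℂ | 1 < ‖u‖}, ζ * z ∈ {u : ℂ | 1 < ‖u‖} := fun z hz => by
    simpa [hζ1] using hz
  set χ : ℝ → ℂ := fun t => ζ * h (ζ * (t * u)) / h (t * u)
  have hχc : ContinuousOn χ (Ici 1) := by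
    have hcu : Continuous fun t : ℝ => (t : ℂ) * u := by fun_prop
    exact (continuousOn_const.mul (hh.comp (continuous_const.mul hcu).continuousOn
      fun t ht => hrot _ (hray t ht))).div (hh.comp hcu.continuousOn hray)
      fun t ht => hh0 _ (hray t ht)
  have hχroots : MapsTo χ (Ici 1) (Polynomial.nthRoots d (1 : ℂ)).toFinset := fun t ht => by
    simp only [Finset.mem_coe, Multiset.mem_toFinset,
      Polynomial.mem_nthRoots (Nat.pos_of_ne_zero hd)]
    rw [div_pow, mul_pow, hζ, one_mul, hpow _ (hray t ht),
      div_self (pow_ne_zero _ (hh0 _ (hray t ht)))]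
  have hχ1 : χ 1 = 1 := by
    simp [χ, heq, hh0 u hu]
  have hχlim : Tendsto χ atTop (𝓝 ζ) := by
    have hlim : ∀ c ≠ (0 : ℂ), Tendsto (fun t : ℝ => h (t * c)) atTop (𝓝 1) := fun c hc =>
      hh1.comp (tendsto_ofReal_mul_atTop_cobounded hc)
    have hζ0 : ζ ≠ 0 := norm_ne_zero_iff.1 (hζ1 ▸ one_ne_zero)
    have := ((hlim _ (mul_ne_zero hζ0 hu0)).const_mul ζ).div (hlim u hu0) one_ne_zero
    simp only [mul_one, div_one] at this
    refine this.congr fun t => ?_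
    simp only [χ, Pi.div_apply, mul_left_comm]
  refine tendsto_nhds_unique hχlim (tendsto_const_nhds.congr' ?_)
  filter_upwards [eventually_ge_atTop 1] with t ht
  rw [← hχ1]
  exact isPreconnected_Ici.constant_of_mapsTo (Finset.finite_toSet _).isDiscrete hχc hχroots
    (mem_Ici.2 le_rfl) ht

theorem rotated_uniformizing_map_injective (d : ℕ) (hd : 0 < d) (r : ℝ) (hr : 0 < r)
    (g : ℂ → ℂ) (hg : DifferentiableOn ℂ g {u : ℂ | 1 < ‖u‖})
    (hg0 : ∀ u ∈ {u : ℂ | 1 < ‖u‖}, g u ≠ 0)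
    (hg1 : Tendsto g (comap (fun u : ℂ => ‖u‖) atTop) (nhds 1))
    (hf : Set.InjOn (fun u : ℂ => (r : ℂ) * u * g u) {u : ℂ | 1 < ‖u‖}) :
    (∃ h : ℂ → ℂ, DifferentiableOn ℂ h {u : ℂ | 1 < ‖u‖} ∧
        (∀ u ∈ {u : ℂ | 1 < ‖u‖}, h u ^ d = g (u ^ d)) ∧
        Tendsto h (comap (fun u : ℂ => ‖u‖) atTop) (nhds 1)) ∧
    ∀ h : ℂ → ℂ, DifferentiableOn ℂ h {u : ℂ | 1 < ‖u‖} →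
      (∀ u ∈ {u : ℂ | 1 < ‖u‖}, h u ^ d = g (u ^ d)) →
      Tendsto h (comap (fun u : ℂ => ‖u‖) atTop) (nhds 1) →
      Set.InjOn (fun u : ℂ => ((r ^ ((d : ℝ)⁻¹) : ℝ) : ℂ) * u * h u)
        {u : ℂ | 1 < ‖u‖} := by
  simp only [comap_norm_atTop] at hg1 ⊢
  refine ⟨exists_pow_eq_comp_pow hd.ne' hg hg0 hg1, fun h hh hpow hh1 u hu v hv huv => ?_⟩
  set c : ℂ := ((r ^ ((d : ℝ)⁻¹) : ℝ) : ℂ)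
  have hc : c ^ d = r := by
    rw [← ofReal_pow, Real.rpow_inv_natCast_pow hr.le hd.ne']
  have hc0 : c ≠ 0 := ofReal_ne_zero.2 (Real.rpow_pos_of_pos hr _).ne'
  have hu0 : u ≠ 0 := norm_pos_iff.1 (one_pos.trans hu)
  have huv_pow : u ^ d = v ^ d := by
    refine hf (pow_mem_of_one_lt_norm hd.ne' hu) (pow_mem_of_one_lt_norm hd.ne' hv) ?_
    simpa only [mul_pow, hc, hpow u hu, hpow v hv] using congr_arg (· ^ d) huv
  obtain ⟨ζ, rfl⟩ : ∃ ζ, v = ζ * u := ⟨v / u, (div_mul_cancel₀ v hu0).symm⟩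
  have hζ : ζ ^ d = 1 := by
    rwa [mul_pow, right_eq_mul₀ (pow_ne_zero d hu0)] at huv_pow
  have hh0 : ∀ z ∈ {u : ℂ | 1 < ‖u‖}, h z ≠ 0 := fun z hz hz0 =>
    hg0 _ (pow_mem_of_one_lt_norm hd.ne' hz) (by rw [← hpow z hz, hz0, zero_pow hd.ne'])
  have hrot : ∀ z ∈ {u : ℂ | 1 < ‖u‖}, h (ζ * z) ^ d = h z ^ d := fun z hz => by
    have hζz : ζ * z ∈ {u : ℂ | 1 < ‖u‖} := by
      simpa [norm_eq_one_of_pow_eq_one hζ hd.ne'] using hz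
    rw [hpow _ hζz, hpow _ hz, mul_pow, hζ, one_mul]
  have heq : ζ * h (ζ * u) = h u := by
    refine mul_left_cancel₀ (mul_ne_zero hc0 hu0) ?_
    linear_combination huv.symm
  rw [eq_one_of_mul_eq_of_pow_eq_one hd.ne' hζ hu hh.continuousOn hh0 hrot hh1 heq, one_mul]
end

section
/- Let n and d be positive integers with 0 < d < 2n and let T > 0. Define t_cr = (n/d)·(T/(2n−d))^{(2n−d)/(2n)} and r_cr = (T/(2n−d))^{d/(2n)}. Then r_cr satisfies the conformal radius equation at the critical value, i.e. r_cr^{4n/d − 2} − (T/n)·r_cr^{2n/d − 2} + ((n−d)/n)·(d²/n²)·t_cr² = 0, and moreover (d/n)·t_cr·r_cr^{1 − 2n/d} = 1, i.e. the corresponding parameter α = −(d/n)·t̄·r_cr^{1 − 2n/d} has modulus exactly 1 when |t| = t_cr. -/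
/-!
Write `m = 2n/d` and `x = T/(2n - d)`. The critical radius is `r = x^(1/m)`, so `r^m = x`, and the
critical coupling is `t = (n/d) x^((2n-d)/(2n)) = (n/d) r^(m-1)`. In terms of `r` alone the
conformal radius equation factors as `r^(m-2) (r^m (2n-d) - T) / n = 0`, and
`(d/n) t r^(1-m) = r^(m-1) r^(1-m) = 1`.
-/

open Real

namespace CriticalValues

variable {n d r T : ℝ}

lemma rpow_div_rpow_inv {x : ℝ} (hx : 0 ≤ x) (hn : n ≠ 0) (hd : d ≠ 0) :
    (x ^ (d / (2 * n))) ^ (2 * n / d) = x := by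
  rw [← inv_div d, rpow_rpow_inv hx (by positivity)]

lemma rpow_sub_div_eq_rpow_rpow {x : ℝ} (hx : 0 ≤ x) (hn : n ≠ 0) (hd : d ≠ 0) :
    x ^ ((2 * n - d) / (2 * n)) = (x ^ (d / (2 * n))) ^ (2 * n / d - 1) := by
  rw [← rpow_mul hx]
  congr 1
  field_simp

lemma conformal_radius_eq_zero (hr : 0 < r) (hn : n ≠ 0) (hd : d ≠ 0)
    (hrT : r ^ (2 * n / d) * (2 * n - d) = T) :
    r ^ (4 * n / d - 2) - (T / n) * r ^ (2 * n / d - 2) +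
      ((n - d) / n) * (d ^ 2 / n ^ 2) * ((n / d) * r ^ (2 * n / d - 1)) ^ 2 = 0 := by
  have hsq : (r ^ (2 * n / d - 1)) ^ 2 = r ^ (2 * n / d) * r ^ (2 * n / d - 2) := by
    rw [← rpow_natCast, ← rpow_mul hr.le, ← rpow_add hr]
    congr 1
    ring
  have hsplit : r ^ (4 * n / d - 2) = r ^ (2 * n / d) * r ^ (2 * n / d - 2) := by
    rw [← rpow_add hr]
    congr 1
    ring
  rw [mul_pow, hsq, hsplit, ← hrT]
  field_simp
  ring

lemma critical_alpha_eq_one (hr : 0 < r) (hn : n ≠ 0) (hd : d ≠ 0) :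
    (d / n) * ((n / d) * r ^ (2 * n / d - 1)) * r ^ (1 - 2 * n / d) = 1 := by
  rw [mul_assoc, mul_assoc, ← rpow_add hr, sub_add_sub_cancel', sub_self, rpow_zero]
  field_simp

end CriticalValues

open CriticalValues in
theorem critical_values_satisfy_equations (n d : ℕ) (hd : 0 < d) (hdn : d < 2 * n)
    (T : ℝ) (hT : 0 < T) :
    ((T / (2 * (n : ℝ) - d)) ^ ((d : ℝ) / (2 * n))) ^ (4 * (n : ℝ) / d - 2) -
        (T / n) * ((T / (2 * (n : ℝ) - d)) ^ ((d : ℝ) / (2 * n))) ^ (2 * (n : ℝ) / d - 2) +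
        (((n : ℝ) - d) / n) * ((d : ℝ) ^ 2 / (n : ℝ) ^ 2) *
          (((n : ℝ) / d) * (T / (2 * (n : ℝ) - d)) ^ ((2 * (n : ℝ) - d) / (2 * n))) ^ 2 = 0 ∧
    ((d : ℝ) / n) *
        (((n : ℝ) / d) * (T / (2 * (n : ℝ) - d)) ^ ((2 * (n : ℝ) - d) / (2 * n))) *
        ((T / (2 * (n : ℝ) - d)) ^ ((d : ℝ) / (2 * n))) ^ (1 - 2 * (n : ℝ) / d) = 1 := by
  have hdR : (d : ℝ) ≠ 0 := by positivity
  have hnR : (n : ℝ) ≠ 0 := by norm_cast; omega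
  have hgap : (0 : ℝ) < 2 * n - d := by
    rw [sub_pos]
    exact_mod_cast hdn
  have hx : 0 < T / (2 * (n : ℝ) - d) := div_pos hT hgap
  have hr := rpow_pos_of_pos hx ((d : ℝ) / (2 * n))
  rw [rpow_sub_div_eq_rpow_rpow hx.le hnR hdR]
  refine ⟨conformal_radius_eq_zero hr hnR hdR ?_, critical_alpha_eq_one hr hnR hdR⟩
  rw [rpow_div_rpow_inv hx.le hnR hdR]
  field_simp
end
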